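/- arXiv:math/0004168 — 8 statements merged into one kernel-verified Lean document; each statement's English description precedes it below -/
import Mathlib

section
/- Let X be a real or complex Banach space. Then condition (A2) holds in X if and only if condition (A3) holds in X. (A2): there exist a sequence (ε_n) of positive numbers converging to 0 and a sequence (x_n) in X such that ∑_{n=1}^m |a_n| ≤ ‖∑_{n=1}^m a_n x_n‖ ≤ ∑_{n=1}^m (1+ε_n)|a_n| for every finite sequence (a_n)_{n=1}^m of scalars. (A3): there exist a sequence (ε_n) of positive numbers converging to 0 and a sequence (x_n) in X such that ∑_{n=k}^m |a_n| ≤ ‖∑_{n=k}^m a_n x_n‖ ≤ (1+ε_k) ∑_{n=k}^m |a_n| for every k ∈ ℕ and every finite sequence (a_n)_{n=k}^m of scalars. -/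
/-!
(A3) ⇒ (A2): the lower bound is the case `k = 0`, and the upper bound follows from the triangle
inequality together with the one-term case `k = m = n`, which gives `‖a n • x n‖ ≤ (1 + ε n) ‖a n‖`.

(A2) ⇒ (A3) with the same vectors: padding the coefficients by zeros, the two-sided bound of (A2)
holds over every finite set of indices, in particular over `Icc k m`; there `1 + ε n ≤ 1 + ε' k`
for the tail suprema `ε' k = ⨆ i, ε (i + k)`, which are still positive and still tend to `0`.
-/

open Filter Finset Topology

theorem le_iSup_add_of_le {u : ℕ → ℝ} (hu : BddAbove (Set.range u)) {k n : ℕ} (hkn : k ≤ n) :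
    u n ≤ ⨆ i, u (i + k) :=
  (le_ciSup (hu.mono (Set.range_comp_subset_range _ u)) (n - k)).trans_eq'
    (by rw [Function.comp_apply, Nat.sub_add_cancel hkn])

theorem Filter.Tendsto.tendsto_iSup_add {u : ℕ → ℝ} {a : ℝ} (h : Tendsto u atTop (𝓝 a)) :
    Tendsto (fun k => ⨆ i, u (i + k)) atTop (𝓝 a) := by
  refine tendsto_order.2 ⟨fun b hb => ?_, fun b hb => ?_⟩
  · filter_upwards [(tendsto_order.1 h).1 b hb] with k hk
    exact hk.trans_le (le_iSup_add_of_le h.bddAbove_range le_rfl)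
  · obtain ⟨c, hac, hcb⟩ := exists_between hb
    obtain ⟨N, hN⟩ := eventually_atTop.1 ((tendsto_order.1 h).2 c hac)
    filter_upwards [eventually_ge_atTop N] with k hk
    exact (ciSup_le fun i => (hN (i + k) (by omega)).le).trans_lt hcb

theorem bounds_finset_of_bounds_range {𝕜 X : Type*} [NormedField 𝕜] [SeminormedAddCommGroup X]
    [Module 𝕜 X] {ε : ℕ → ℝ} {x : ℕ → X}
    (h : ∀ (m : ℕ) (a : ℕ → 𝕜),
      (∑ n ∈ range m, ‖a n‖) ≤ ‖∑ n ∈ range m, a n • x n‖ ∧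
        ‖∑ n ∈ range m, a n • x n‖ ≤ ∑ n ∈ range m, (1 + ε n) * ‖a n‖)
    (s : Finset ℕ) (a : ℕ → 𝕜) :
    (∑ n ∈ s, ‖a n‖) ≤ ‖∑ n ∈ s, a n • x n‖ ∧
      ‖∑ n ∈ s, a n • x n‖ ≤ ∑ n ∈ s, (1 + ε n) * ‖a n‖ := by
  obtain ⟨m, hsm⟩ := s.exists_nat_subset_range
  have hpad := h m (Set.indicator s a)
  rwa [sum_indicator_subset_of_eq_zero a (fun _ c => ‖c‖) hsm fun _ => norm_zero,
    sum_indicator_subset_of_eq_zero a (fun n c => c • x n) hsm fun _ => zero_smul 𝕜 _,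
    sum_indicator_subset_of_eq_zero a (fun n c => (1 + ε n) * ‖c‖) hsm
      fun _ => by rw [norm_zero, mul_zero]] at hpad

theorem a2_iff_a3_general (𝕜 : Type*) [RCLike 𝕜] (X : Type*) [NormedAddCommGroup X]
    [NormedSpace 𝕜 X] :
    (∃ (ε : ℕ → ℝ) (x : ℕ → X), (∀ n, 0 < ε n) ∧
        Tendsto ε atTop (nhds 0) ∧
        ∀ (m : ℕ) (a : ℕ → 𝕜),
          (∑ n ∈ Finset.range m, ‖a n‖) ≤ ‖∑ n ∈ Finset.range m, a n • x n‖ ∧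
          ‖∑ n ∈ Finset.range m, a n • x n‖ ≤ ∑ n ∈ Finset.range m, (1 + ε n) * ‖a n‖) ↔
    (∃ (ε : ℕ → ℝ) (x : ℕ → X), (∀ n, 0 < ε n) ∧
        Tendsto ε atTop (nhds 0) ∧
        ∀ (k m : ℕ) (a : ℕ → 𝕜),
          (∑ n ∈ Finset.Icc k m, ‖a n‖) ≤ ‖∑ n ∈ Finset.Icc k m, a n • x n‖ ∧
          ‖∑ n ∈ Finset.Icc k m, a n • x n‖ ≤ (1 + ε k) * ∑ n ∈ Finset.Icc k m, ‖a n‖) := by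
  constructor
  · rintro ⟨ε, x, hpos, hlim, h⟩
    have le_tail {k n : ℕ} (hkn : k ≤ n) : ε n ≤ ⨆ i, ε (i + k) :=
      le_iSup_add_of_le hlim.bddAbove_range hkn
    refine ⟨fun k => ⨆ i, ε (i + k), x, fun k => (hpos k).trans_le (le_tail le_rfl),
      hlim.tendsto_iSup_add, fun k m a => ?_⟩
    obtain ⟨hlo, hhi⟩ := bounds_finset_of_bounds_range h (Icc k m) a
    refine ⟨hlo, hhi.trans ?_⟩
    rw [mul_sum]
    exact sum_le_sum fun n hn => by gcongr; exact le_tail (mem_Icc.1 hn).1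
  · rintro ⟨ε, x, hpos, hlim, h⟩
    refine ⟨ε, x, hpos, hlim, fun m a => ⟨?_, (norm_sum_le _ _).trans <|
      sum_le_sum fun n _ => by simpa using (h n n a).2⟩⟩
    rcases eq_or_ne m 0 with rfl | hm
    · simp
    · rw [Nat.range_eq_Icc_zero_sub_one m hm]
      exact (h 0 (m - 1) a).1

/-- **(A2) ⇔ (A3)** for a real or complex Banach space `X`. -/
theorem a2_iff_a3 (𝕜 : Type*) [RCLike 𝕜] (X : Type*) [NormedAddCommGroup X]
    [NormedSpace 𝕜 X] [CompleteSpace X] :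
    (∃ (ε : ℕ → ℝ) (x : ℕ → X), (∀ n, 0 < ε n) ∧
        Tendsto ε atTop (nhds 0) ∧
        ∀ (m : ℕ) (a : ℕ → 𝕜),
          (∑ n ∈ Finset.range m, ‖a n‖) ≤ ‖∑ n ∈ Finset.range m, a n • x n‖ ∧
          ‖∑ n ∈ Finset.range m, a n • x n‖ ≤ ∑ n ∈ Finset.range m, (1 + ε n) * ‖a n‖) ↔
    (∃ (ε : ℕ → ℝ) (x : ℕ → X), (∀ n, 0 < ε n) ∧
        Tendsto ε atTop (nhds 0) ∧
        ∀ (k m : ℕ) (a : ℕ → 𝕜),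
          (∑ n ∈ Finset.Icc k m, ‖a n‖) ≤ ‖∑ n ∈ Finset.Icc k m, a n • x n‖ ∧
          ‖∑ n ∈ Finset.Icc k m, a n • x n‖ ≤ (1 + ε k) * ∑ n ∈ Finset.Icc k m, ‖a n‖) :=
  a2_iff_a3_general 𝕜 X
end

section
/- Let X be a real or complex Banach space and let (x̃_n) be a perturbation of an isometric copy of ℓ₁ in X with respect to a null sequence (ε̃_n) of positive numbers with each ε̃_n < 1. Set ε_n = (1+ε̃_n)/(1−ε̃_n) − 1 and x_n = x̃_n/(1−ε̃_n). Then ε_n → 0 and the sequence (x_n) satisfies ∑_{n=1}^m |a_n| ≤ ‖∑_{n=1}^m a_n x_n‖ ≤ ∑_{n=1}^m (1+ε_n)|a_n| for every finite sequence (a_n)_{n=1}^m of scalars; in particular (x_n) is an asymptotically isometric copy of ℓ₁. -/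
open Filter Finset

/-!
Rescaling by `(1 - ε̃ n)⁻¹` turns the two-sided estimate
`∑ ‖b n‖ (1 - ε̃ n) ≤ ‖∑ b n • T x̃ n‖ ≤ ∑ ‖b n‖ (1 + ε̃ n)`, which holds because `T x̃ n` is
within `ε̃ n` of the isometric `ℓ₁`-basis `y n`, into the stated bounds; since `T` is an
isometry, norms may be computed in `Y`.
-/

theorem tendsto_one_add_div_one_sub_sub_one {α : Type*} {l : Filter α} {ε : α → ℝ}
    (hε : Tendsto ε l (nhds 0)) :
    Tendsto (fun i => (1 + ε i) / (1 - ε i) - 1) l (nhds 0) := by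
  have h := (((tendsto_const_nhds (x := (1 : ℝ))).add hε).div
    ((tendsto_const_nhds (x := (1 : ℝ))).sub hε) (by norm_num)).sub_const 1
  simpa using h

section Perturbation

variable {ι 𝕜 E : Type*} [NormedField 𝕜] [SeminormedAddCommGroup E] [NormedSpace 𝕜 E]
  {s : Finset ι} {y z : ι → E} {δ : ι → ℝ}

theorem norm_sum_smul_sub_sum_smul_le (b : ι → 𝕜) (hclose : ∀ i ∈ s, ‖y i - z i‖ ≤ δ i) :
    ‖∑ i ∈ s, b i • y i - ∑ i ∈ s, b i • z i‖ ≤ ∑ i ∈ s, ‖b i‖ * δ i := by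
  rw [← sum_sub_distrib]
  refine norm_sum_le_of_le s fun i hi => ?_
  rw [← smul_sub, norm_smul]
  exact mul_le_mul_of_nonneg_left (hclose i hi) (norm_nonneg _)

theorem sum_norm_mul_le_norm_sum_smul_of_perturbation (b : ι → 𝕜)
    (hy : ‖∑ i ∈ s, b i • y i‖ = ∑ i ∈ s, ‖b i‖) (hclose : ∀ i ∈ s, ‖y i - z i‖ ≤ δ i) :
    ∑ i ∈ s, ‖b i‖ * (1 - δ i) ≤ ‖∑ i ∈ s, b i • z i‖ ∧
      ‖∑ i ∈ s, b i • z i‖ ≤ ∑ i ∈ s, ‖b i‖ * (1 + δ i) := by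
  have hdist := (abs_norm_sub_norm_le _ _).trans (norm_sum_smul_sub_sum_smul_le b hclose)
  rw [hy] at hdist
  simp only [mul_sub, mul_add, mul_one, sum_sub_distrib, sum_add_distrib]
  constructor <;> linarith [abs_le.mp hdist]

end Perturbation

theorem sum_norm_le_norm_sum_smul_inv_one_sub_smul {ι 𝕜 E : Type*} [RCLike 𝕜]
    [SeminormedAddCommGroup E] [NormedSpace 𝕜 E] {s : Finset ι} {y z : ι → E} {δ : ι → ℝ}
    (hy : ∀ b : ι → 𝕜, ‖∑ i ∈ s, b i • y i‖ = ∑ i ∈ s, ‖b i‖)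
    (hclose : ∀ i ∈ s, ‖y i - z i‖ ≤ δ i) (hδ : ∀ i, δ i < 1) (a : ι → 𝕜) :
    ∑ i ∈ s, ‖a i‖ ≤ ‖∑ i ∈ s, a i • (((1 - δ i : ℝ) : 𝕜)⁻¹ • z i)‖ ∧
      ‖∑ i ∈ s, a i • (((1 - δ i : ℝ) : 𝕜)⁻¹ • z i)‖ ≤
        ∑ i ∈ s, (1 + ((1 + δ i) / (1 - δ i) - 1)) * ‖a i‖ := by
  set b : ι → 𝕜 := fun i => a i * ((1 - δ i : ℝ) : 𝕜)⁻¹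
  have hpos : ∀ i, 0 < 1 - δ i := fun i => sub_pos.mpr (hδ i)
  have hnorm_b : ∀ i, ‖b i‖ = ‖a i‖ / (1 - δ i) := fun i => by
    simp only [b, norm_mul, norm_inv, RCLike.norm_ofReal, abs_of_pos (hpos i), div_eq_mul_inv]
  have hsum : ∑ i ∈ s, a i • (((1 - δ i : ℝ) : 𝕜)⁻¹ • z i) = ∑ i ∈ s, b i • z i :=
    sum_congr rfl fun i _ => smul_smul _ _ _
  have hlower : ∀ i, ‖b i‖ * (1 - δ i) = ‖a i‖ := fun i => by
    rw [hnorm_b, div_mul_cancel₀ _ (hpos i).ne']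
  have hupper : ∀ i, ‖b i‖ * (1 + δ i) = (1 + ((1 + δ i) / (1 - δ i) - 1)) * ‖a i‖ :=
    fun i => by rw [hnorm_b]; ring
  obtain ⟨hle, hge⟩ := sum_norm_mul_le_norm_sum_smul_of_perturbation b (hy b) hclose
  simp only [hlower, hupper] at hle hge
  rw [hsum]
  exact ⟨hle, hge⟩

theorem pi_l1_sequence_scaled_satisfies_A2_general (𝕜 : Type*) [RCLike 𝕜]
    (X : Type*) [NormedAddCommGroup X] [NormedSpace 𝕜 X]
    (Y : Type*) [NormedAddCommGroup Y] [NormedSpace 𝕜 Y]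
    (εt : ℕ → ℝ) (hlt1 : ∀ n, εt n < 1)
    (hnull : Tendsto εt atTop (nhds 0))
    (xt : ℕ → X) (T : X →ₗᵢ[𝕜] Y) (y : ℕ → Y)
    (hy : ∀ (m : ℕ) (a : ℕ → 𝕜),
      ‖∑ n ∈ Finset.range m, a n • y n‖ = ∑ n ∈ Finset.range m, ‖a n‖)
    (hclose : ∀ n, ‖y n - T (xt n)‖ ≤ εt n) :
    Tendsto (fun n => (1 + εt n) / (1 - εt n) - 1) atTop (nhds 0) ∧
    ∀ (m : ℕ) (a : ℕ → 𝕜),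
      (∑ n ∈ Finset.range m, ‖a n‖) ≤
          ‖∑ n ∈ Finset.range m, a n • (((1 - εt n : ℝ) : 𝕜)⁻¹ • xt n)‖ ∧
      ‖∑ n ∈ Finset.range m, a n • (((1 - εt n : ℝ) : 𝕜)⁻¹ • xt n)‖ ≤
          ∑ n ∈ Finset.range m, (1 + ((1 + εt n) / (1 - εt n) - 1)) * ‖a n‖ := by
  refine ⟨tendsto_one_add_div_one_sub_sub_one hnull, fun m a => ?_⟩
  have hT : ‖∑ n ∈ range m, a n • (((1 - εt n : ℝ) : 𝕜)⁻¹ • xt n)‖ =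
      ‖∑ n ∈ range m, a n • (((1 - εt n : ℝ) : 𝕜)⁻¹ • T (xt n))‖ := by
    simp only [← T.norm_map, map_sum, map_smul]
  rw [hT]
  exact sum_norm_le_norm_sum_smul_inv_one_sub_smul (hy m) (fun n _ => hclose n) hlt1 a

/-- If `(x̃ n)` is a perturbation of an isometric copy of `ℓ₁` in `X` with respect to a
null sequence `(ε̃ n)` of positive numbers less than one, then with
`ε n = (1 + ε̃ n)/(1 - ε̃ n) - 1` and `x n = x̃ n / (1 - ε̃ n)` one has `ε n → 0` and
`∑ |a n| ≤ ‖∑ a n • x n‖ ≤ ∑ (1 + ε n) |a n|`; in particular `(x n)` is an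
asymptotically isometric copy of `ℓ₁` (satisfying (A2)). -/
theorem pi_l1_sequence_scaled_satisfies_A2 (𝕜 : Type*) [RCLike 𝕜]
    (X : Type*) [NormedAddCommGroup X] [NormedSpace 𝕜 X] [CompleteSpace X]
    (Y : Type*) [NormedAddCommGroup Y] [NormedSpace 𝕜 Y] [CompleteSpace Y]
    (εt : ℕ → ℝ) (hpos : ∀ n, 0 < εt n) (hlt1 : ∀ n, εt n < 1)
    (hnull : Tendsto εt atTop (nhds 0))
    (xt : ℕ → X) (T : X →ₗᵢ[𝕜] Y) (y : ℕ → Y)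
    (hy : ∀ (m : ℕ) (a : ℕ → 𝕜),
      ‖∑ n ∈ Finset.range m, a n • y n‖ = ∑ n ∈ Finset.range m, ‖a n‖)
    (hclose : ∀ n, ‖y n - T (xt n)‖ ≤ εt n) :
    Tendsto (fun n => (1 + εt n) / (1 - εt n) - 1) atTop (nhds 0) ∧
    ∀ (m : ℕ) (a : ℕ → 𝕜),
      (∑ n ∈ Finset.range m, ‖a n‖) ≤
          ‖∑ n ∈ Finset.range m, a n • (((1 - εt n : ℝ) : 𝕜)⁻¹ • xt n)‖ ∧
      ‖∑ n ∈ Finset.range m, a n • (((1 - εt n : ℝ) : 𝕜)⁻¹ • xt n)‖ ≤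
          ∑ n ∈ Finset.range m, (1 + ((1 + εt n) / (1 - εt n) - 1)) * ‖a n‖ :=
  pi_l1_sequence_scaled_satisfies_A2_general 𝕜 X Y εt hlt1 hnull xt T y hy hclose
end

section
/- Let X be a real or complex Banach space and suppose ℓ₁ is linearly isometric to a quotient space of a subspace of X, i.e. there exist a closed subspace X₀ of X, a closed subspace X₁ of X₀, and a surjective linear isometry from X₀/X₁ onto ℓ₁. Then X contains asymptotically isometric copies of ℓ₁. Moreover, for every sequence (ε_n) of positive numbers converging to 0 there exists a sequence (x_n) in X with ∑_{n=1}^m |a_n| ≤ ‖∑_{n=1}^m a_n x_n‖ ≤ ∑_{n=1}^m (1+ε_n)|a_n| for every finite scalar sequence (a_n)_{n=1}^m. -/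
open Filter Finset

/-- `X` contains asymptotically isometric copies of `ℓ₁`. -/
def ContainsAICopiesOfL1 (𝕜 X : Type*) [RCLike 𝕜] [NormedAddCommGroup X]
    [NormedSpace 𝕜 X] : Prop :=
  ∃ (ε : ℕ → ℝ) (x : ℕ → X), (∀ n, 0 < ε n ∧ ε n < 1) ∧
    Tendsto ε atTop (nhds 0) ∧
    ∀ (m : ℕ) (a : ℕ → 𝕜),
      (∑ n ∈ Finset.range m, (1 - ε n) * ‖a n‖) ≤ ‖∑ n ∈ Finset.range m, a n • x n‖ ∧
      ‖∑ n ∈ Finset.range m, a n • x n‖ ≤ ∑ n ∈ Finset.range m, ‖a n‖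

/-!
The images in `X₀ ⧸ X₁` of the unit vectors of `ℓ₁` have norm one and satisfy the lower
`ℓ₁`-estimate `∑ ‖a n‖ ≤ ‖∑ a n • q n‖` with constant one. Lift each `q n` to some `x n ∈ X₀`
with `‖x n‖ < 1 + ε n`; since the quotient map does not increase norms, the lifts keep the lower
estimate, and the triangle inequality gives the upper one. Dividing `x n` by `1 + ε n` trades
this for the normalization of asymptotically isometric copies, as `1 - ε ≤ (1 + ε)⁻¹`.
-/

section L1LowerBound

variable {𝕜 : Type*} [RCLike 𝕜] {E F : Type*} [SeminormedAddCommGroup E] [NormedSpace 𝕜 E]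
  [SeminormedAddCommGroup F] [NormedSpace 𝕜 F]

variable (𝕜) in
def L1LowerBound (x : ℕ → E) (c : ℕ → ℝ) : Prop :=
  ∀ (m : ℕ) (a : ℕ → 𝕜), ∑ n ∈ range m, c n * ‖a n‖ ≤ ‖∑ n ∈ range m, a n • x n‖

theorem norm_sum_smul_le_of_norm_le {x : ℕ → E} {C : ℕ → ℝ} (hx : ∀ n, ‖x n‖ ≤ C n)
    (m : ℕ) (a : ℕ → 𝕜) : ‖∑ n ∈ range m, a n • x n‖ ≤ ∑ n ∈ range m, C n * ‖a n‖ :=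
  calc ‖∑ n ∈ range m, a n • x n‖ ≤ ∑ n ∈ range m, ‖a n • x n‖ := norm_sum_le _ _
    _ ≤ ∑ n ∈ range m, C n * ‖a n‖ := sum_le_sum fun n _ => by
        rw [norm_smul, mul_comm]
        exact mul_le_mul_of_nonneg_right (hx n) (norm_nonneg _)

namespace L1LowerBound

variable {x : ℕ → E} {c : ℕ → ℝ}

theorem mono (hx : L1LowerBound 𝕜 x c) {c' : ℕ → ℝ} (hc : ∀ n, c' n ≤ c n) :
    L1LowerBound 𝕜 x c' := fun m a =>
  (sum_le_sum fun n _ => mul_le_mul_of_nonneg_right (hc n) (norm_nonneg _)).trans (hx m a)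

theorem smul (hx : L1LowerBound 𝕜 x c) {r : ℕ → ℝ} (hr : ∀ n, 0 ≤ r n) :
    L1LowerBound 𝕜 (fun n => (r n : 𝕜) • x n) (fun n => r n * c n) := fun m a => by
  have hsum : ∑ n ∈ range m, a n • (r n : 𝕜) • x n = ∑ n ∈ range m, (a n * r n) • x n :=
    sum_congr rfl fun n _ => smul_smul _ _ _
  have hnorm : ∀ n, ‖a n * r n‖ = r n * ‖a n‖ := fun n => by
    rw [norm_mul, RCLike.norm_ofReal, abs_of_nonneg (hr n), mul_comm]
  rw [hsum]
  refine le_of_eq_of_le (sum_congr rfl fun n _ => ?_) (hx m fun n => a n * r n)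
  rw [hnorm]
  ring

theorem map (hx : L1LowerBound 𝕜 x c) (f : E →ₗᵢ[𝕜] F) :
    L1LowerBound 𝕜 (fun n => f (x n)) c := fun m a => by
  simpa only [← map_smul, ← map_sum, f.norm_map] using hx m a

theorem exists_lift {S : Submodule 𝕜 E} {q : ℕ → E ⧸ S} (hq : L1LowerBound 𝕜 q c)
    {ε : ℕ → ℝ} (hε : ∀ n, 0 < ε n) :
    ∃ y : ℕ → E, L1LowerBound 𝕜 y c ∧ ∀ n, ‖y n‖ < ‖q n‖ + ε n := by
  choose y hyq hy using fun n => Submodule.Quotient.norm_mk_lt (q n) (hε n)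
  refine ⟨y, fun m a => (hq m a).trans ?_, hy⟩
  calc ‖∑ n ∈ range m, a n • q n‖
      = ‖S.mkQ (∑ n ∈ range m, a n • y n)‖ := by
        simp only [map_sum, map_smul, Submodule.mkQ_apply, hyq]
    _ ≤ ‖∑ n ∈ range m, a n • y n‖ := Submodule.Quotient.norm_mk_le _ _

end L1LowerBound

theorem lp.l1LowerBound_single_one :
    L1LowerBound 𝕜 (fun n => lp.single 1 n (1 : 𝕜)) 1 := fun m a => by
  have hsingle (n : ℕ) : a n • lp.single 1 n (1 : 𝕜) = lp.single (E := fun _ => 𝕜) 1 n (a n) := by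
    rw [← lp.single_smul, smul_eq_mul, mul_one]
  have hl1 := lp.norm_sum_single (p := 1) (by norm_num) a (range m)
  simp only [ENNReal.toReal_one, Real.rpow_one] at hl1
  simp only [hsingle, hl1, Pi.one_apply, one_mul, le_refl]

theorem exists_l1LowerBound_one_of_quotient_linearIsometryEquiv_lp_one {S : Submodule 𝕜 E}
    (Φ : (E ⧸ S) ≃ₗᵢ[𝕜] lp (fun _ : ℕ => 𝕜) 1) {ε : ℕ → ℝ} (hε : ∀ n, 0 < ε n) :
    ∃ y : ℕ → E, L1LowerBound 𝕜 y 1 ∧ ∀ n, ‖y n‖ < 1 + ε n := by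
  have hnorm : ∀ n, ‖Φ.symm (lp.single 1 n (1 : 𝕜))‖ = 1 := fun n => by
    rw [Φ.symm.norm_map, lp.norm_single (by norm_num), norm_one]
  simpa only [LinearIsometryEquiv.coe_toLinearIsometry, hnorm] using
    (lp.l1LowerBound_single_one.map Φ.symm.toLinearIsometry).exists_lift hε

theorem containsAICopiesOfL1_of_forall_exists_l1LowerBound_one {X : Type*}
    [NormedAddCommGroup X] [NormedSpace 𝕜 X]
    (h : ∀ ε : ℕ → ℝ, (∀ n, 0 < ε n) →
      ∃ x : ℕ → X, L1LowerBound 𝕜 x 1 ∧ ∀ n, ‖x n‖ ≤ 1 + ε n) :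
    ContainsAICopiesOfL1 𝕜 X := by
  set δ : ℕ → ℝ := fun n => (2 : ℝ)⁻¹ ^ (n + 1)
  have hδ : ∀ n, 0 < δ n ∧ δ n < 1 := fun n =>
    ⟨by positivity, pow_lt_one₀ (by norm_num) (by norm_num) n.succ_ne_zero⟩
  have hδ_lim : Tendsto δ atTop (nhds 0) :=
    (tendsto_pow_atTop_nhds_zero_of_lt_one (by norm_num) (by norm_num)).comp
      (tendsto_add_atTop_nat 1)
  obtain ⟨x, hx, hxδ⟩ := h δ fun n => (hδ n).1
  have hpos : ∀ n, 0 < 1 + δ n := fun n => by linarith [(hδ n).1]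
  -- `(1 - δ) (1 + δ) = 1 - δ² ≤ 1`
  have hlower : ∀ n, 1 - δ n ≤ (1 + δ n)⁻¹ * 1 := fun n => by
    rw [mul_one, ← one_div, le_div_iff₀ (hpos n)]
    nlinarith [sq_nonneg (δ n)]
  have hnorm : ∀ n, ‖(((1 + δ n)⁻¹ : ℝ) : 𝕜) • x n‖ ≤ 1 := fun n => by
    rw [norm_smul, RCLike.norm_ofReal, abs_of_pos (inv_pos.2 (hpos n)),
      inv_mul_le_iff₀ (hpos n), mul_one]
    exact hxδ n
  refine ⟨δ, fun n => (((1 + δ n)⁻¹ : ℝ) : 𝕜) • x n, hδ, hδ_lim, fun m a => ⟨?_, ?_⟩⟩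
  · exact (hx.smul fun n => (inv_pos.2 (hpos n)).le).mono hlower m a
  · simpa only [one_mul] using norm_sum_smul_le_of_norm_le (C := fun _ => 1) hnorm m a

end L1LowerBound

theorem ai_of_l1_quotient_of_subspace_general (𝕜 : Type*) [RCLike 𝕜]
    (X : Type*) [NormedAddCommGroup X] [NormedSpace 𝕜 X]
    (X₀ : Subspace 𝕜 X)
    (X₁ : Subspace 𝕜 X₀)
    (h : Nonempty ((X₀ ⧸ X₁) ≃ₗᵢ[𝕜] lp (fun _ : ℕ => 𝕜) 1)) :
    ContainsAICopiesOfL1 𝕜 X ∧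
    ∀ ε : ℕ → ℝ, (∀ n, 0 < ε n) → Tendsto ε atTop (nhds 0) →
      ∃ x : ℕ → X, ∀ (m : ℕ) (a : ℕ → 𝕜),
        (∑ n ∈ Finset.range m, ‖a n‖) ≤ ‖∑ n ∈ Finset.range m, a n • x n‖ ∧
        ‖∑ n ∈ Finset.range m, a n • x n‖ ≤ ∑ n ∈ Finset.range m, (1 + ε n) * ‖a n‖ := by
  obtain ⟨Φ⟩ := h
  have lifts : ∀ ε : ℕ → ℝ, (∀ n, 0 < ε n) →
      ∃ x : ℕ → X, L1LowerBound 𝕜 x 1 ∧ ∀ n, ‖x n‖ ≤ 1 + ε n := fun ε hε => by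
    obtain ⟨y, hy, hy_norm⟩ := exists_l1LowerBound_one_of_quotient_linearIsometryEquiv_lp_one Φ hε
    exact ⟨fun n => y n, hy.map X₀.subtypeₗᵢ, fun n => (hy_norm n).le⟩
  refine ⟨containsAICopiesOfL1_of_forall_exists_l1LowerBound_one lifts, fun ε hε _ => ?_⟩
  obtain ⟨x, hx, hx_norm⟩ := lifts ε hε
  refine ⟨x, fun m a => ⟨?_, norm_sum_smul_le_of_norm_le hx_norm m a⟩⟩
  simpa only [Pi.one_apply, one_mul] using hx m a

/-- If `ℓ₁` is linearly isometric to a quotient space of a subspace of `X`, then `X`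
contains asymptotically isometric copies of `ℓ₁`; moreover for every null sequence
`(ε n)` of positive numbers there is a sequence `(x n)` in `X` satisfying (A2). -/
theorem ai_of_l1_quotient_of_subspace (𝕜 : Type*) [RCLike 𝕜]
    (X : Type*) [NormedAddCommGroup X] [NormedSpace 𝕜 X] [CompleteSpace X]
    (X₀ : Subspace 𝕜 X) (hX₀ : IsClosed (X₀ : Set X))
    (X₁ : Subspace 𝕜 X₀) (hX₁ : IsClosed (X₁ : Set X₀))
    (h : Nonempty ((X₀ ⧸ X₁) ≃ₗᵢ[𝕜] lp (fun _ : ℕ => 𝕜) 1)) :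
    ContainsAICopiesOfL1 𝕜 X ∧
    ∀ ε : ℕ → ℝ, (∀ n, 0 < ε n) → Tendsto ε atTop (nhds 0) →
      ∃ x : ℕ → X, ∀ (m : ℕ) (a : ℕ → 𝕜),
        (∑ n ∈ Finset.range m, ‖a n‖) ≤ ‖∑ n ∈ Finset.range m, a n • x n‖ ∧
        ‖∑ n ∈ Finset.range m, a n • x n‖ ≤ ∑ n ∈ Finset.range m, (1 + ε n) * ‖a n‖ :=
  ai_of_l1_quotient_of_subspace_general 𝕜 X X₀ X₁ h
end

section
/- Let X be a real or complex Banach space containing asymptotically isometric copies of ℓ₁. Then the dual C([0,1])* of the Banach space C([0,1]) of continuous scalar-valued functions on [0,1] is linearly isometric to a subspace of the dual space X*; that is, there exists a linear isometric embedding of C([0,1])* into X*. -/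
open Filter Finset

/-!
Fix an asymptotically isometric `ℓ₁`-sequence `(xₙ, εₙ)` and a sequence `(gₙ)` in the unit ball
of `C([0,1])` that comes back infinitely often near every point of the ball. For each
`t ∈ [0,1]`, Hahn–Banach gives `Λₜ ∈ X*` of norm `≤ 1` with `Λₜ xₙ = (1 - εₙ) gₙ(t)`: the lower
`ℓ₁`-estimate is exactly what makes this prescription contractive. Then `μ ↦ ∫ Λₜ dμ(t)` is a
contraction `C([0,1])* → X*`; as `t ↦ Λₜ` need not be continuous, this integral is taken as a
weak-* ultrafilter limit of the Bernstein sums `∑ₖ μ(bₙₖ) Λ_{k/n}`, whose norms are at most `‖μ‖`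
because the `bₙₖ` form a partition of unity. Its value at `xₙ` is `(1 - εₙ) μ(gₙ)`, and these
numbers approach `‖μ‖` in modulus since `εₙ → 0`, so the map is isometric.
-/

open Topology Metric unitInterval bernstein

section HahnBanach

variable {𝕜 : Type*} [RCLike 𝕜] {X : Type*} [NormedAddCommGroup X] [NormedSpace 𝕜 X]

theorem exists_dual_apply_eq_of_norm_le {ι : Type*} (x : ι → X) (c : ι → 𝕜)
    (h : ∀ a : ι →₀ 𝕜,
      ‖Finsupp.linearCombination 𝕜 c a‖ ≤ ‖Finsupp.linearCombination 𝕜 x a‖) :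
    ∃ Λ : StrongDual 𝕜 X, ‖Λ‖ ≤ 1 ∧ ∀ i, Λ (x i) = c i := by
  set L := Finsupp.linearCombination 𝕜 x
  set K := Finsupp.linearCombination 𝕜 c
  have hker : LinearMap.ker L ≤ LinearMap.ker K := fun a ha => by
    simpa [LinearMap.mem_ker.1 ha] using h a
  let f : LinearMap.range L →ₗ[𝕜] 𝕜 :=
    ((LinearMap.ker L).liftQ K hker).comp L.quotKerEquivRange.symm.toLinearMap
  have hf : ∀ a, f ⟨L a, L.mem_range_self a⟩ = K a := fun a => by
    simp [f, LinearMap.quotKerEquivRange_symm_apply_image]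
  have hbound : ∀ y, ‖f y‖ ≤ 1 * ‖y‖ := by
    rintro ⟨_, a, rfl⟩
    simpa [hf] using h a
  obtain ⟨Λ, hΛ, hΛnorm⟩ := exists_extension_norm_eq _ (f.mkContinuous 1 hbound)
  refine ⟨Λ, hΛnorm ▸ f.mkContinuous_norm_le zero_le_one hbound, fun i => ?_⟩
  have hi := hΛ ⟨L (Finsupp.single i 1), L.mem_range_self _⟩
  rw [LinearMap.mkContinuous_apply, hf] at hi
  simpa [L, K] using hi

theorem exists_dual_apply_eq_mul_of_sum_le {ε : ℕ → ℝ} {x : ℕ → X} (hε : ∀ n, ε n ≤ 1)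
    (hx : ∀ (m : ℕ) (a : ℕ → 𝕜),
      ∑ n ∈ range m, (1 - ε n) * ‖a n‖ ≤ ‖∑ n ∈ range m, a n • x n‖)
    (c : ℕ → 𝕜) (hc : ∀ n, ‖c n‖ ≤ 1) :
    ∃ Λ : StrongDual 𝕜 X, ‖Λ‖ ≤ 1 ∧ ∀ n, Λ (x n) = ((1 - ε n : ℝ) : 𝕜) * c n := by
  refine exists_dual_apply_eq_of_norm_le x _ fun a => ?_
  obtain ⟨m, hm⟩ := a.support.exists_nat_subset_range
  simp only [Finsupp.linearCombination_apply]
  rw [a.sum_of_support_subset hm _ (by simp), a.sum_of_support_subset hm _ (by simp)]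
  refine (norm_sum_le _ _).trans ((sum_le_sum fun n _ => ?_).trans (hx m a))
  rw [norm_smul, norm_mul, RCLike.norm_ofReal, abs_of_nonneg (sub_nonneg.2 (hε n)), mul_comm]
  exact mul_le_mul_of_nonneg_right (mul_le_of_le_one_right (sub_nonneg.2 (hε n)) (hc n))
    (norm_nonneg _)

end HahnBanach

theorem LinearMap.exists_tendsto_ultrafilter_of_norm_apply_le {𝕜 E F G ι : Type*}
    [RCLike 𝕜] [AddCommMonoid E] [Module 𝕜 E] [NormedAddCommGroup F]
    [NormedSpace 𝕜 F] [NormedAddCommGroup G] [NormedSpace 𝕜 G] [ProperSpace G]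
    (U : Ultrafilter ι) (S : ι → E →ₗ[𝕜] F →L[𝕜] G) {p : E → ℝ}
    (hS : ∀ i u, ‖S i u‖ ≤ p u) :
    ∃ T : E →ₗ[𝕜] F →L[𝕜] G, (∀ u, ‖T u‖ ≤ p u) ∧
      ∀ u v, Tendsto (fun i => S i u v) U (𝓝 (T u v)) := by
  have hS' : ∀ i u v, S i u v ∈ closedBall 0 (p u * ‖v‖) := fun i u v =>
    mem_closedBall_zero_iff.2 ((S i u).le_of_opNorm_le (hS i u) v)
  have hlim : ∀ u v, ∃ w ∈ closedBall 0 (p u * ‖v‖),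
      Tendsto (fun i => S i u v) U (𝓝 w) := fun u v =>
    (isCompact_closedBall _ _).ultrafilter_le_nhds (U.map _)
      (le_principal_iff.2 (Ultrafilter.mem_map.2 (univ_mem' (hS' · u v))))
  choose B hB hBlim using hlim
  have hB_eq : ∀ {u v w}, Tendsto (fun i => S i u v) U (𝓝 w) → B u v = w :=
    tendsto_nhds_unique (hBlim _ _)
  have hp : ∀ u, 0 ≤ p u := fun u =>
    (norm_nonneg _).trans (hS (nonempty_of_neBot (U : Filter ι)).some u)
  let Bₗ (u : E) : F →ₗ[𝕜] G :=
    { toFun := B u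
      map_add' := fun v₁ v₂ => hB_eq (by simpa using (hBlim u v₁).add (hBlim u v₂))
      map_smul' := fun c v => hB_eq (by simpa using (hBlim u v).const_smul c) }
  have hBₗ : ∀ u v, ‖Bₗ u v‖ ≤ p u * ‖v‖ := fun u v => mem_closedBall_zero_iff.1 (hB u v)
  refine ⟨{ toFun u := (Bₗ u).mkContinuous _ (hBₗ u)
            map_add' u₁ u₂ := ?_
            map_smul' c u := ?_ },
    fun u => (Bₗ u).mkContinuous_norm_le (hp u) (hBₗ u), hBlim⟩
  · ext v
    exact hB_eq (by simpa [Bₗ] using (hBlim u₁ v).add (hBlim u₂ v))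
  · ext v
    exact hB_eq (by simpa [Bₗ] using (hBlim u v).const_smul c)

theorem exists_seq_forall_mapClusterPt {E : Type*} [TopologicalSpace E]
    [SecondCountableTopology E] {s : Set E} (hs : s.Nonempty) :
    ∃ g : ℕ → E, (∀ n, g n ∈ s) ∧ ∀ φ ∈ s, MapClusterPt φ atTop g := by
  have := hs.to_subtype
  obtain ⟨d, hd⟩ := TopologicalSpace.exists_dense_seq s
  refine ⟨fun n => d n.unpair.2, fun n => (d _).2, fun φ hφ => ?_⟩
  -- every `d k` is visited at the indices `Nat.pair N k ≥ N`
  rw [mapClusterPt_iff_frequently]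
  intro t ht
  obtain ⟨k, hk⟩ := hd.mem_nhds (continuous_subtype_val.continuousAt.preimage_mem_nhds
    (x := ⟨φ, hφ⟩) ht)
  exact frequently_atTop.2 fun N => ⟨N.pair k, N.left_le_pair k, by simpa using hk⟩

theorem ContinuousLinearMap.norm_le_of_forall_mapClusterPt {𝕜 E : Type*} [RCLike 𝕜]
    [NormedAddCommGroup E] [NormedSpace 𝕜 E] (μ : StrongDual 𝕜 E) {g : ℕ → E}
    (hg : ∀ φ, ‖φ‖ = 1 → MapClusterPt φ atTop g) {r : ℕ → ℝ} (hr : Tendsto r atTop (𝓝 1))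
    {C : ℝ} (hC : 0 ≤ C) (h : ∀ n, r n * ‖μ (g n)‖ ≤ C) : ‖μ‖ ≤ C := by
  refine μ.opNorm_le_of_unit_norm hC fun φ hφ => ?_
  obtain ⟨ψ, hψ, hgψ⟩ := (hg φ hφ).tendsto_subseq
  have hlim : Tendsto (fun j => r (ψ j) * ‖μ (g (ψ j))‖) atTop (𝓝 (1 * ‖μ φ‖)) :=
    (hr.comp hψ.tendsto_atTop).mul ((μ.continuous.tendsto φ).comp hgψ).norm
  simpa using le_of_tendsto' hlim fun j => h (ψ j)

section Bernstein

variable {𝕜 : Type*} [RCLike 𝕜]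

theorem RCLike.exists_norm_le_one_mul_eq_norm (z : 𝕜) : ∃ u : 𝕜, ‖u‖ ≤ 1 ∧ u * z = ‖z‖ := by
  refine ⟨‖z‖ * z⁻¹, ?_, ?_⟩
  · rw [norm_mul, norm_inv, RCLike.norm_ofReal, abs_norm]
    exact mul_inv_le_one
  · rcases eq_or_ne z 0 with rfl | hz
    · simp
    · rw [mul_assoc, inv_mul_cancel₀ hz, mul_one]

theorem ContinuousMap.sum_norm_apply_ofReal_le {K ι : Type*} [TopologicalSpace K]
    [CompactSpace K] [Fintype ι] (ψ : ι → C(K, ℝ)) (hψ0 : ∀ i t, 0 ≤ ψ i t)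
    (hψ1 : ∀ t, ∑ i, ψ i t ≤ 1) (μ : StrongDual 𝕜 C(K, 𝕜)) :
    ∑ i, ‖μ (RCLike.ofRealCLM.compLeftContinuous ℝ K (ψ i))‖ ≤ ‖μ‖ := by
  set ψ' : ι → C(K, 𝕜) := fun i => RCLike.ofRealCLM.compLeftContinuous ℝ K (ψ i)
  choose u hu1 hu using fun i => RCLike.exists_norm_le_one_mul_eq_norm (μ (ψ' i))
  set h : C(K, 𝕜) := ∑ i, u i • ψ' i
  have hh : ‖h‖ ≤ 1 := (ContinuousMap.norm_le _ zero_le_one).2 fun t => calc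
    ‖h t‖ ≤ ∑ i, ‖u i‖ * ψ i t := by
      simpa [h, ψ', abs_of_nonneg (hψ0 _ t)] using norm_sum_le univ fun i => u i * (ψ i t : 𝕜)
    _ ≤ ∑ i, ψ i t := sum_le_sum fun i _ => mul_le_of_le_one_left (hψ0 i t) (hu1 i)
    _ ≤ 1 := hψ1 t
  have hμh : μ h = ((∑ i, ‖μ (ψ' i)‖ : ℝ) : 𝕜) := by simp [h, hu]
  calc ∑ i, ‖μ (ψ' i)‖ = ‖μ h‖ := by
        rw [hμh, RCLike.norm_ofReal, abs_of_nonneg (sum_nonneg fun i _ => norm_nonneg _)]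
    _ ≤ ‖μ‖ * ‖h‖ := μ.le_opNorm h
    _ ≤ ‖μ‖ := mul_le_of_le_one_right (norm_nonneg _) hh

variable {X : Type*} [NormedAddCommGroup X] [NormedSpace 𝕜 X]

noncomputable def bernsteinDualMap (Λ : I → StrongDual 𝕜 X) (n : ℕ) :
    StrongDual 𝕜 C(I, 𝕜) →ₗ[𝕜] StrongDual 𝕜 X where
  toFun μ := ∑ k : Fin (n + 1),
    μ (RCLike.ofRealCLM.compLeftContinuous ℝ I (bernstein n k)) • Λ (z k)
  map_add' μ ν := by
    ext v
    simp [add_mul, sum_add_distrib]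
  map_smul' c μ := by
    ext v
    simp [mul_sum, mul_assoc]

theorem bernsteinDualMap_apply_apply (Λ : I → StrongDual 𝕜 X) (n : ℕ)
    (μ : StrongDual 𝕜 C(I, 𝕜)) {v : X} {f : C(I, 𝕜)} (hf : ∀ t, Λ t v = f t) :
    bernsteinDualMap Λ n μ v = μ (bernsteinApproximation n f) := by
  have hB : bernsteinApproximation n f =
      ∑ k : Fin (n + 1), f (z k) • RCLike.ofRealCLM.compLeftContinuous ℝ I (bernstein n k) := by
    ext t
    simp [bernsteinApproximation.apply, RCLike.real_smul_eq_coe_mul, mul_comm]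
  simp [bernsteinDualMap, hB, hf, mul_comm]

theorem norm_bernsteinDualMap_apply_le {Λ : I → StrongDual 𝕜 X} {C : ℝ}
    (hΛ : ∀ t, ‖Λ t‖ ≤ C) (n : ℕ) (μ : StrongDual 𝕜 C(I, 𝕜)) :
    ‖bernsteinDualMap Λ n μ‖ ≤ C * ‖μ‖ := by
  have hC : 0 ≤ C := (norm_nonneg _).trans (hΛ 0)
  calc ‖bernsteinDualMap Λ n μ‖
      = ‖∑ k : Fin (n + 1),
          μ (RCLike.ofRealCLM.compLeftContinuous ℝ I (bernstein n k)) • Λ (z k)‖ := rfl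
    _ ≤ ∑ k : Fin (n + 1),
          ‖μ (RCLike.ofRealCLM.compLeftContinuous ℝ I (bernstein n k))‖ * C :=
        (norm_sum_le _ _).trans (sum_le_sum fun k _ => by
          rw [norm_smul (μ _) (Λ (z k))]; gcongr; exact hΛ _)
    _ ≤ C * ‖μ‖ := by
        rw [← sum_mul, mul_comm]
        gcongr
        exact ContinuousMap.sum_norm_apply_ofReal_le _ (fun _ _ => bernstein_nonneg)
          (fun t => (probability n t).le) μ

theorem exists_weakStar_integral {Λ : I → StrongDual 𝕜 X} {C : ℝ} (hΛ : ∀ t, ‖Λ t‖ ≤ C) :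
    ∃ T : StrongDual 𝕜 C(I, 𝕜) →ₗ[𝕜] StrongDual 𝕜 X, (∀ μ, ‖T μ‖ ≤ C * ‖μ‖) ∧
      ∀ (v : X) (f : C(I, 𝕜)), (∀ t, Λ t v = f t) → ∀ μ, T μ v = μ f := by
  obtain ⟨T, hT, hTlim⟩ := LinearMap.exists_tendsto_ultrafilter_of_norm_apply_le
    (Ultrafilter.of (atTop : Filter ℕ)) (bernsteinDualMap Λ) (norm_bernsteinDualMap_apply_le hΛ)
  refine ⟨T, hT, fun v f hf μ => tendsto_nhds_unique (hTlim μ v) ?_⟩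
  simp_rw [bernsteinDualMap_apply_apply Λ _ μ hf]
  exact ((μ.continuous.tendsto f).comp (bernsteinApproximation_uniform f)).mono_left
    (Ultrafilter.of_le _)

end Bernstein

theorem dual_C01_embeds_of_ai_general (𝕜 : Type*) [RCLike 𝕜]
    (X : Type*) [NormedAddCommGroup X] [NormedSpace 𝕜 X]
    (h : ContainsAICopiesOfL1 𝕜 X) :
    Nonempty
      ((StrongDual 𝕜 C(Set.Icc (0:ℝ) 1, 𝕜)) →ₗᵢ[𝕜] StrongDual 𝕜 X) := by
  obtain ⟨ε, x, hε, hε0, hx⟩ := h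
  have hxn : ∀ n, ‖x n‖ ≤ 1 := fun n => by
    simpa [Pi.single_apply, apply_ite] using (hx (n + 1) (Pi.single n 1)).2
  obtain ⟨g, hg, hg_dense⟩ := exists_seq_forall_mapClusterPt
    (nonempty_closedBall.2 zero_le_one : (closedBall (0 : C(I, 𝕜)) 1).Nonempty)
  have hgt : ∀ t n, ‖g n t‖ ≤ 1 := fun t n =>
    ((g n).norm_coe_le_norm t).trans (mem_closedBall_zero_iff.1 (hg n))
  choose Λ hΛ hΛx using fun t : I =>
    exists_dual_apply_eq_mul_of_sum_le (fun n => (hε n).2.le) (fun m a => (hx m a).1) _ (hgt t)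
  obtain ⟨T, hT, hTx⟩ := exists_weakStar_integral hΛ
  have hTxn : ∀ μ n, T μ (x n) = ((1 - ε n : ℝ) : 𝕜) * μ (g n) := fun μ n => by
    rw [hTx (x n) (((1 - ε n : ℝ) : 𝕜) • g n) (by simp [hΛx]) μ, map_smul, smul_eq_mul]
  refine ⟨⟨T, fun μ => le_antisymm (by simpa using hT μ) ?_⟩⟩
  have hε1 : Tendsto (fun n => 1 - ε n) atTop (𝓝 1) := by
    simpa using tendsto_const_nhds.sub hε0
  refine μ.norm_le_of_forall_mapClusterPt
    (fun φ hφ => hg_dense φ (mem_closedBall_zero_iff.2 hφ.le)) hε1 (norm_nonneg _) fun n => ?_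
  calc (1 - ε n) * ‖μ (g n)‖ = ‖T μ (x n)‖ := by
        rw [hTxn, norm_mul, RCLike.norm_ofReal, abs_of_nonneg (sub_nonneg.2 (hε n).2.le)]
    _ ≤ ‖T μ‖ := ((T μ).le_opNorm _).trans (mul_le_of_le_one_right (norm_nonneg _) (hxn n))

/-- If `X` contains asymptotically isometric copies of `ℓ₁`, then the dual of
`C([0,1])` embeds linearly isometrically into `X*`. -/
theorem dual_C01_embeds_of_ai (𝕜 : Type*) [RCLike 𝕜]
    (X : Type*) [NormedAddCommGroup X] [NormedSpace 𝕜 X] [CompleteSpace X]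
    (h : ContainsAICopiesOfL1 𝕜 X) :
    Nonempty
      ((StrongDual 𝕜 C(Set.Icc (0:ℝ) 1, 𝕜)) →ₗᵢ[𝕜] StrongDual 𝕜 X) :=
  dual_C01_embeds_of_ai_general 𝕜 X h
end

section
/- Let X be a real or complex Banach space containing asymptotically isometric copies of ℓ₁. Then X* contains an infinite subset Γ (of cardinality the continuum, indexed by [0,1]) which is isometrically equivalent to the usual basis of ℓ₁(Γ) — i.e. ‖∑_{γ∈F} a_γ γ‖ = ∑_{γ∈F} |a_γ| for every finite subset F of Γ and scalars (a_γ)_{γ∈F} — and which is dense-in-itself in the weak-star topology on X*, i.e. no point of Γ is isolated in Γ for the relative weak-star topology. -/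
/-!
Fix an asymptotically isometric `ℓ₁`-sequence `(xₙ)` with constants `εₙ → 0`. Index the Cantor
set by `r : ℕ → Bool` and choose unimodular scalars `ψ r n`, each depending on finitely many
coordinates of `r`, such that for any finitely many distinct `r` and any unimodular targets, at
infinitely many `n` all `ψ r n` are close to their targets. By the lower `ℓ₁` estimate and
Hahn–Banach, each sequence `((1 - εₙ) ψ r n)ₙ` is the sequence of values on `(xₙ)` of a functional
of norm at most `1`, and any such functionals form an isometric `ℓ₁`-basis: evaluating
`∑ a_γ γ` at a suitable `xₙ` aligns all the phases.

To make the family weak*-dense-in-itself, pick the functionals inside a minimal weak*-closed subset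
`K` of the dual ball (Zorn and Banach–Alaoglu) that still meets every prescribed fibre. Removing a
weak*-open set `V` from `K` loses a whole fibre; since the prescribed values depend continuously on
`r`, it loses an open set of fibres, and as the Cantor set has no isolated points that open set
contains an index other than the one we started from. Its functional lies in `V`.
-/

open Filter Finset

open Topology Function

instance {ι β : Type*} [Infinite ι] [TopologicalSpace β] [Nontrivial β] : PerfectSpace (ι → β) := by
  classical
  refine perfectSpace_iff_forall_not_isolated.2 fun r => ?_
  have hupd : Tendsto (fun i => update r i (exists_ne (r i)).choose) cofinite (𝓝[≠] r) := by
    refine tendsto_nhdsWithin_iff.2 ⟨tendsto_pi_nhds.2 fun j => ?_, .of_forall fun i h => ?_⟩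
    · exact tendsto_const_nhds.congr' ((eventually_cofinite_ne j).mono fun i hi =>
        (update_of_ne hi.symm _ r).symm)
    · exact (exists_ne (r i)).choose_spec (by simpa using congrFun h i)
  exact hupd.neBot

section
variable {Y Z T ι : Type*} [TopologicalSpace Y] [TopologicalSpace Z] [TopologicalSpace T]

theorem IsCompact.exists_minimal_closed_subset_inter_nonempty {K₀ : Set Y} (hK₀ : IsCompact K₀)
    (hK₀c : IsClosed K₀) {C : ι → Set Y} (hC : ∀ i, IsClosed (C i))
    (hK₀C : ∀ i, (K₀ ∩ C i).Nonempty) :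
    ∃ K, Minimal (fun K => K ⊆ K₀ ∧ IsClosed K ∧ ∀ i, (K ∩ C i).Nonempty) K := by
  let S := {K | K ⊆ K₀ ∧ IsClosed K ∧ ∀ i, (K ∩ C i).Nonempty}
  refine (zorn_superset_nonempty S (fun c hcS hchain hcne => ?_) K₀
    ⟨subset_rfl, hK₀c, hK₀C⟩).imp fun K hK => hK.2
  refine ⟨⋂₀ c, ⟨?_, isClosed_sInter fun K hK => (hcS hK).2.1, fun i => ?_⟩,
    fun K hK => Set.sInter_subset_of_mem hK⟩
  · obtain ⟨K, hK⟩ := hcne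
    exact (Set.sInter_subset_of_mem hK).trans (hcS hK).1
  · have : Nonempty c := hcne.to_subtype
    have h := IsCompact.nonempty_iInter_of_directed_nonempty_isCompact_isClosed
      (fun K : c => (K : Set Y) ∩ C i) ?_ (fun K => (hcS K.2).2.2 i)
      (fun K => hK₀.of_isClosed_subset ((hcS K.2).2.1.inter (hC i))
        (Set.inter_subset_left.trans (hcS K.2).1))
      (fun K => (hcS K.2).2.1.inter (hC i))
    · rwa [← Set.iInter_inter, ← Set.sInter_eq_iInter] at h
    · intro K₁ K₂
      rcases hchain.total K₁.2 K₂.2 with h | h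
      · exact ⟨K₁, subset_rfl, Set.inter_subset_inter_left _ h⟩
      · exact ⟨K₂, Set.inter_subset_inter_left _ h, subset_rfl⟩

theorem IsOpen.nontrivial_of_nonempty [PerfectSpace T] {W : Set T} (hW : IsOpen W)
    (hne : W.Nonempty) : W.Nontrivial := by
  obtain ⟨t, ht⟩ := hne
  obtain ⟨t', ⟨-, ht'⟩, hne⟩ := accPt_iff_nhds.1 (hW.preperfect t ht) Set.univ Filter.univ_mem
  exact ⟨t', ht', t, ht, hne⟩

theorem exists_section_preperfect_range [T2Space Z] [PerfectSpace T] {Θ : Y → Z}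
    (hΘ : Continuous Θ) {φ : T → Z} (hφ : Continuous φ) (hφinj : Injective φ) {K₀ : Set Y}
    (hK₀ : IsCompact K₀) (hK₀c : IsClosed K₀) (hK₀φ : ∀ t, ∃ y ∈ K₀, Θ y = φ t) :
    ∃ σ : T → Y, (∀ t, σ t ∈ K₀ ∧ Θ (σ t) = φ t) ∧ Preperfect (Set.range σ) := by
  obtain ⟨K, hK⟩ := hK₀.exists_minimal_closed_subset_inter_nonempty hK₀c
    (C := fun t => Θ ⁻¹' {φ t}) (fun t => isClosed_singleton.preimage hΘ) hK₀φ
  obtain ⟨hKK₀, hKc, hKφ⟩ := hK.prop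
  choose σ hσK hσΘ using hKφ
  refine ⟨σ, fun t => ⟨hKK₀ (hσK t), hσΘ t⟩, ?_⟩
  rintro _ ⟨t, rfl⟩
  refine accPt_iff_nhds.2 fun U hU => ?_
  have hKU : IsClosed (K \ interior U) := hKc.sdiff isOpen_interior
  obtain ⟨t₁, ht₁⟩ : ∃ t₁, ¬ (K \ interior U ∩ Θ ⁻¹' {φ t₁}).Nonempty := by
    by_contra! h
    have := hK.le_of_le ⟨Set.sdiff_subset.trans hKK₀, hKU, h⟩ Set.sdiff_subset (hσK t)
    exact this.2 (mem_interior_iff_mem_nhds.2 hU)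
  let W := φ ⁻¹' (Θ '' (K \ interior U))ᶜ
  have hW : IsOpen W := ((hK₀.of_isClosed_subset hKU (Set.sdiff_subset.trans hKK₀)).image
    hΘ).isClosed.isOpen_compl.preimage hφ
  obtain ⟨t', ht'W, ht't⟩ := (hW.nontrivial_of_nonempty
    ⟨t₁, fun ⟨y, hy, hyt⟩ => ht₁ ⟨y, hy, hyt⟩⟩).exists_ne t
  have hσt' : σ t' ∈ interior U := by
    by_contra h
    exact ht'W ⟨σ t', ⟨hσK t', h⟩, hσΘ t'⟩
  exact ⟨σ t', ⟨interior_subset hσt', t', rfl⟩,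
    fun h => ht't (hφinj (by rw [← hσΘ t', ← hσΘ t, h]))⟩
end

theorem exists_seq_frequently_eq (β : Type*) [Countable β] [Nonempty β] :
    ∃ e : ℕ → β, ∀ b, ∃ᶠ n in atTop, e n = b := by
  obtain ⟨e, he⟩ := exists_surjective_nat β
  refine ⟨fun n => e n.unpair.1, fun b => Nat.frequently_atTop_iff_infinite.2 ?_⟩
  obtain ⟨m, rfl⟩ := he b
  refine Set.infinite_of_injective_forall_mem (f := Nat.pair m)
    (fun _ _ h => (Nat.pair_eq_pair.1 h).2) fun k => ?_
  simp

theorem Set.Finite.exists_injOn_restrict_fin {α : Type*} {R : Set (ℕ → α)} (hR : R.Finite) :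
    ∃ L : ℕ, Set.InjOn (fun r (i : Fin L) => r i) R := by
  suffices ∀ᶠ L in atTop, Set.InjOn (fun r (i : Fin L) => r i) R from this.exists
  refine (eventually_all_finite hR).2 fun r _ => (eventually_all_finite hR).2 fun r' _ => ?_
  by_cases h : r = r'
  · exact .of_forall fun _ _ => h
  obtain ⟨k, hk⟩ := Function.ne_iff.1 h
  filter_upwards [eventually_gt_atTop k] with L hL heq
  exact absurd (congrFun heq ⟨k, hL⟩) hk

def JointlyFrequentlyDense {T S : Type*} [TopologicalSpace S] (ψ : T → ℕ → S) : Prop :=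
  ∀ R : Set T, R.Finite → ∀ U : T → Set S, (∀ r ∈ R, IsOpen (U r) ∧ (U r).Nonempty) →
    ∃ᶠ n in atTop, ∀ r ∈ R, ψ r n ∈ U r

section
variable {T S : Type*} [TopologicalSpace S]

theorem JointlyFrequentlyDense.injective [T2Space S] [Nontrivial S] {ψ : T → ℕ → S}
    (hψ : JointlyFrequentlyDense ψ) : Injective ψ := by
  classical
  intro r r' h
  by_contra hne
  obtain ⟨s₀, s₁, hs⟩ := exists_pair_ne S
  obtain ⟨U₀, U₁, hU₀, hU₁, hs₀, hs₁, hU⟩ := t2_separation hs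
  let U := fun q => if q = r then U₀ else U₁
  have hU' : ∀ q ∈ ({r, r'} : Set T), IsOpen (U q) ∧ (U q).Nonempty := fun q _ => by
    unfold U; split_ifs
    exacts [⟨hU₀, s₀, hs₀⟩, ⟨hU₁, s₁, hs₁⟩]
  obtain ⟨n, hn⟩ := (hψ {r, r'} (Set.toFinite _) U hU').exists
  have h₀ := hn r (by simp)
  have h₁ := hn r' (by simp)
  simp only [U, if_pos, if_neg (Ne.symm hne), h] at h₀ h₁
  exact hU.le_bot ⟨h₀, h₁⟩

theorem exists_jointlyFrequentlyDense_on_cantor [TopologicalSpace.SeparableSpace S]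
    [Nonempty S] :
    ∃ ψ : (ℕ → Bool) → ℕ → S, (∀ n, Continuous fun r => ψ r n) ∧ JointlyFrequentlyDense ψ := by
  classical
  -- `e` lists every rule `v` choosing a point of the dense sequence from the first `L`
  -- coordinates, each one infinitely often.
  obtain ⟨e, he⟩ := exists_seq_frequently_eq (Σ L : ℕ, (Fin L → Bool) → ℕ)
  let d := TopologicalSpace.denseSeq S
  let ev : (Σ L : ℕ, (Fin L → Bool) → ℕ) → (ℕ → Bool) → ℕ := fun p r => p.2 fun i => r i
  refine ⟨fun r n => d (ev (e n) r), fun n => ?_, fun R hR U hU => ?_⟩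
  · exact continuous_of_discreteTopology.comp (continuous_of_discreteTopology.comp
      (continuous_pi fun i => continuous_apply (i : ℕ)) : Continuous fun r => ev (e n) r)
  obtain ⟨L, hL⟩ := hR.exists_injOn_restrict_fin
  have : ∀ r, ∃ k, r ∈ R → d k ∈ U r := fun r => by
    by_cases hr : r ∈ R
    · exact ((TopologicalSpace.denseRange_denseSeq S).exists_mem_open (hU r hr).1
        (hU r hr).2).imp fun _ h _ => h
    · exact ⟨0, fun h => absurd h hr⟩
  choose k hk using this
  let v : (Fin L → Bool) → ℕ := fun t => k (invFunOn (fun r (i : Fin L) => r i) R t)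
  refine (he ⟨L, v⟩).mono fun n hn r hr => ?_
  simp only [ev, hn, v, hL.leftInvOn_invFunOn hr]
  exact hk r hr
end

theorem RCLike.exists_norm_eq_one_mul_eq_norm {𝕜 : Type*} [RCLike 𝕜] (z : 𝕜) :
    ∃ w : 𝕜, ‖w‖ = 1 ∧ z * w = ‖z‖ := by
  rcases eq_or_ne z 0 with rfl | hz
  · exact ⟨1, by simp, by simp⟩
  have hz' : (‖z‖ : 𝕜) ≠ 0 := by simpa using hz
  refine ⟨starRingEnd 𝕜 z / ‖z‖, ?_, ?_⟩
  · simp [hz]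
  · rw [← mul_div_assoc, RCLike.mul_conj, sq, mul_div_cancel_right₀ _ hz']

section
variable {𝕜 X : Type*} [RCLike 𝕜] [NormedAddCommGroup X] [NormedSpace 𝕜 X]

theorem exists_strongDual_norm_le_one_apply_eq {ι : Type*} (x : ι → X) (b : ι → 𝕜)
    (h : ∀ c : ι →₀ 𝕜,
      ‖Finsupp.linearCombination 𝕜 b c‖ ≤ ‖Finsupp.linearCombination 𝕜 x c‖) :
    ∃ f : StrongDual 𝕜 X, ‖f‖ ≤ 1 ∧ ∀ i, f (x i) = b i := by
  set Lx := Finsupp.linearCombination 𝕜 x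
  set Lb := Finsupp.linearCombination 𝕜 b
  have hker : LinearMap.ker Lx ≤ LinearMap.ker Lb := fun c hc => by
    simpa [LinearMap.mem_ker.1 hc] using h c
  let g : LinearMap.range Lx →ₗ[𝕜] 𝕜 :=
    (LinearMap.ker Lx).liftQ Lb hker ∘ₗ Lx.quotKerEquivRange.symm.toLinearMap
  have hg : ∀ c, g ⟨Lx c, LinearMap.mem_range_self Lx c⟩ = Lb c := fun c => by
    simp [g, LinearMap.quotKerEquivRange_symm_apply_image]
  have hgb : ∀ y, ‖g y‖ ≤ 1 * ‖y‖ := by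
    rintro ⟨_, c, rfl⟩
    rw [one_mul, hg]
    exact h c
  obtain ⟨f, hfg, hf⟩ := exists_extension_norm_eq _ (g.mkContinuous 1 hgb)
  refine ⟨f, hf ▸ LinearMap.mkContinuous_norm_le _ zero_le_one _, fun i => ?_⟩
  have := hfg ⟨Lx (Finsupp.single i 1), LinearMap.mem_range_self Lx _⟩
  rw [LinearMap.mkContinuous_apply, hg] at this
  simpa [Lx, Lb] using this

theorem norm_sum_smul_eq_sum_norm_of_forall_approx (F : Finset (StrongDual 𝕜 X))
    (hF : ∀ γ ∈ F, ‖γ‖ ≤ 1)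
    (happrox : ∀ w : StrongDual 𝕜 X → 𝕜, (∀ γ ∈ F, ‖w γ‖ = 1) → ∀ δ > 0,
      ∃ y : X, ‖y‖ ≤ 1 ∧ ∀ γ ∈ F, ‖γ y - w γ‖ ≤ δ)
    (a : StrongDual 𝕜 X → 𝕜) :
    ‖∑ γ ∈ F, a γ • γ‖ = ∑ γ ∈ F, ‖a γ‖ := by
  refine le_antisymm ((norm_sum_le _ _).trans (sum_le_sum fun γ hγ => ?_)) ?_
  · rw [norm_smul]
    exact mul_le_of_le_one_right (norm_nonneg _) (hF γ hγ)
  choose w hw1 hwa using fun γ => RCLike.exists_norm_eq_one_mul_eq_norm (a γ)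
  set S := ∑ γ ∈ F, ‖a γ‖
  refine le_of_forall_pos_le_add fun η hη => ?_
  obtain ⟨y, hy, hyw⟩ := happrox w (fun γ _ => hw1 γ) (η / (S + 1)) (by positivity)
  have hsplit : (∑ γ ∈ F, a γ • γ) y - ∑ γ ∈ F, a γ * (γ y - w γ) = (S : 𝕜) := by
    simp [S, ← sum_sub_distrib, mul_sub, hwa]
  have hval : ‖(∑ γ ∈ F, a γ • γ) y‖ ≤ ‖∑ γ ∈ F, a γ • γ‖ :=
    (ContinuousLinearMap.le_opNorm _ _).trans (mul_le_of_le_one_right (norm_nonneg _) hy)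
  have herr : ‖∑ γ ∈ F, a γ * (γ y - w γ)‖ ≤ η := calc
    _ ≤ ∑ γ ∈ F, ‖a γ‖ * (η / (S + 1)) :=
        (norm_sum_le _ _).trans (sum_le_sum fun γ hγ => by
          rw [norm_mul]
          exact mul_le_mul_of_nonneg_left (hyw γ hγ) (norm_nonneg _))
    _ = S / (S + 1) * η := by rw [← sum_mul]; ring
    _ ≤ η := mul_le_of_le_one_left hη.le ((div_le_one (by positivity)).2 (by linarith))
  calc S = ‖(S : 𝕜)‖ := by
        rw [RCLike.norm_ofReal, abs_of_nonneg (sum_nonneg fun γ _ => norm_nonneg (a γ))]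
    _ ≤ ‖(∑ γ ∈ F, a γ • γ) y‖ + ‖∑ γ ∈ F, a γ * (γ y - w γ)‖ := hsplit ▸ norm_sub_le _ _
    _ ≤ _ := add_le_add hval herr

variable {ε : ℕ → ℝ} {x : ℕ → X}

theorem norm_le_one_of_forall_norm_sum_le
    (hup : ∀ (m : ℕ) (a : ℕ → 𝕜), ‖∑ n ∈ range m, a n • x n‖ ≤ ∑ n ∈ range m, ‖a n‖) (n : ℕ) :
    ‖x n‖ ≤ 1 := by
  simpa [Pi.single_apply, apply_ite] using hup (n + 1) (Pi.single n 1)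

theorem sum_le_norm_linearCombination
    (hlow : ∀ (m : ℕ) (a : ℕ → 𝕜),
      ∑ n ∈ range m, (1 - ε n) * ‖a n‖ ≤ ‖∑ n ∈ range m, a n • x n‖)
    (c : ℕ →₀ 𝕜) :
    ∑ n ∈ c.support, (1 - ε n) * ‖c n‖ ≤ ‖Finsupp.linearCombination 𝕜 x c‖ := by
  obtain ⟨m, hm⟩ : ∃ m, c.support ⊆ range m := ⟨c.support.sup id + 1, fun n hn =>
    mem_range.2 (Nat.lt_succ_of_le (le_sup (f := id) hn))⟩
  rw [Finsupp.linearCombination_apply, Finsupp.sum_of_support_subset c hm _ (by simp),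
    sum_subset hm (by simp_all)]
  exact hlow m c

theorem exists_strongDual_norm_le_one_apply_eq_of_norm_le_one_sub
    (hlow : ∀ (m : ℕ) (a : ℕ → 𝕜),
      ∑ n ∈ range m, (1 - ε n) * ‖a n‖ ≤ ‖∑ n ∈ range m, a n • x n‖)
    (b : ℕ → 𝕜) (hb : ∀ n, ‖b n‖ ≤ 1 - ε n) :
    ∃ f : StrongDual 𝕜 X, ‖f‖ ≤ 1 ∧ ∀ n, f (x n) = b n :=
  exists_strongDual_norm_le_one_apply_eq x b fun c => calc
    _ ≤ ∑ n ∈ c.support, ‖c n‖ * ‖b n‖ := by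
        rw [Finsupp.linearCombination_apply, Finsupp.sum]
        exact (norm_sum_le _ _).trans_eq (by simp)
    _ ≤ ∑ n ∈ c.support, (1 - ε n) * ‖c n‖ := sum_le_sum fun n _ => by
        rw [mul_comm]
        exact mul_le_mul_of_nonneg_right (hb n) (norm_nonneg _)
    _ ≤ _ := sum_le_norm_linearCombination hlow c

theorem exists_weakDual_mem_closedBall_apply_eq (hε : ∀ n, ε n < 1)
    (hlow : ∀ (m : ℕ) (a : ℕ → 𝕜),
      ∑ n ∈ range m, (1 - ε n) * ‖a n‖ ≤ ‖∑ n ∈ range m, a n • x n‖)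
    (u : ℕ → Metric.sphere (0 : 𝕜) 1) :
    ∃ f ∈ WeakDual.toStrongDual ⁻¹' Metric.closedBall (0 : StrongDual 𝕜 X) 1,
      (fun n => f (x n)) = fun n => ((1 - ε n : ℝ) : 𝕜) * u n := by
  obtain ⟨f, hf, hfx⟩ := exists_strongDual_norm_le_one_apply_eq_of_norm_le_one_sub hlow
    (fun n => ((1 - ε n : ℝ) : 𝕜) * u n) fun n => by
      rw [norm_mul, RCLike.norm_ofReal, norm_eq_of_mem_sphere, mul_one,
        abs_of_pos (sub_pos.2 (hε n))]
  exact ⟨StrongDual.toWeakDual f, by simpa using hf, funext hfx⟩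

theorem norm_sum_smul_eq_sum_norm_of_subset_range {T : Type*} (hε : Tendsto ε atTop (𝓝 0))
    (hx : ∀ n, ‖x n‖ ≤ 1) {ψ : T → ℕ → Metric.sphere (0 : 𝕜) 1}
    (hψ : JointlyFrequentlyDense ψ) {g : T → StrongDual 𝕜 X} (hg : Injective g)
    (hgn : ∀ t, ‖g t‖ ≤ 1) (hgx : ∀ t n, g t (x n) = ((1 - ε n : ℝ) : 𝕜) * ψ t n)
    {F : Finset (StrongDual 𝕜 X)} (hF : ↑F ⊆ Set.range g) (a : StrongDual 𝕜 X → 𝕜) :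
    ‖∑ γ ∈ F, a γ • γ‖ = ∑ γ ∈ F, ‖a γ‖ := by
  refine norm_sum_smul_eq_sum_norm_of_forall_approx F (fun γ hγ => ?_) (fun w hw δ hδ => ?_) a
  · obtain ⟨t, rfl⟩ := hF hγ
    exact hgn t
  let U : T → Set (Metric.sphere (0 : 𝕜) 1) := fun t => {s | ‖(s : 𝕜) - w (g t)‖ < δ / 2}
  have hU : ∀ t ∈ g ⁻¹' F, IsOpen (U t) ∧ (U t).Nonempty := fun t ht =>
    ⟨isOpen_lt (by fun_prop) continuous_const, ⟨w (g t), by simpa using hw _ ht⟩, by simpa [U]⟩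
  obtain ⟨n, hn, hεn⟩ := ((hψ _ (F.finite_toSet.preimage hg.injOn) _ hU).and_eventually
    (hε.eventually (Metric.ball_mem_nhds 0 (half_pos hδ)))).exists
  refine ⟨x n, hx n, fun γ hγ => ?_⟩
  obtain ⟨t, rfl⟩ := hF hγ
  rw [hgx]
  calc _ ≤ ‖((1 - ε n : ℝ) : 𝕜) * ψ t n - ψ t n‖ + ‖(ψ t n : 𝕜) - w (g t)‖ :=
        norm_sub_le_norm_sub_add_norm_sub _ _ _
    _ = |ε n| + ‖(ψ t n : 𝕜) - w (g t)‖ := by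
        rw [← sub_one_mul, norm_mul, norm_eq_of_mem_sphere]; simp
    _ ≤ δ := by
        have hψw : ‖(ψ t n : 𝕜) - w (g t)‖ < δ / 2 := hn t hγ
        simp only [Real.dist_eq, sub_zero] at hεn
        linarith
end

theorem dual_contains_l1Gamma_set_of_ai_general (𝕜 : Type*) [RCLike 𝕜]
    (X : Type*) [NormedAddCommGroup X] [NormedSpace 𝕜 X]
    (h : ContainsAICopiesOfL1 𝕜 X) :
    ∃ Γ : Set (StrongDual 𝕜 X),
      Γ.Infinite ∧
      Cardinal.mk Γ = Cardinal.continuum ∧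
      (∀ F : Finset (StrongDual 𝕜 X), ↑F ⊆ Γ → ∀ a : StrongDual 𝕜 X → 𝕜,
        ‖∑ γ ∈ F, a γ • γ‖ = ∑ γ ∈ F, ‖a γ‖) ∧
      Preperfect ((fun f => StrongDual.toWeakDual f) '' Γ : Set (WeakDual 𝕜 X)) := by
  obtain ⟨ε, x, hε, hε0, hx⟩ := h
  have : Nontrivial (Metric.sphere (0 : 𝕜) 1) :=
    ⟨⟨1, by simp⟩, ⟨-1, by simp⟩, Subtype.coe_ne_coe.1 (by norm_num)⟩
  obtain ⟨ψ, hψc, hψ⟩ := exists_jointlyFrequentlyDense_on_cantor (S := Metric.sphere (0 : 𝕜) 1)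
  let φ : (ℕ → Bool) → ℕ → 𝕜 := fun r n => ((1 - ε n : ℝ) : 𝕜) * ψ r n
  have hφinj : Injective φ := fun r r' h => hψ.injective <| funext fun n => Subtype.ext <|
    mul_left_cancel₀ (RCLike.ofReal_ne_zero.2 (sub_pos.2 (hε n).2).ne') (congrFun h n)
  obtain ⟨σ, hσ, hσperf⟩ := exists_section_preperfect_range
    (continuous_pi fun n => WeakDual.eval_continuous (x n)) (φ := φ)
    (continuous_pi fun n => continuous_const.mul (continuous_subtype_val.comp (hψc n))) hφinj
    (WeakDual.isCompact_closedBall 0 1) (WeakDual.isClosed_closedBall 0 1) fun r =>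
    exists_weakDual_mem_closedBall_apply_eq (fun n => (hε n).2) (fun m a => (hx m a).1) (ψ r)
  have hσinj : Injective σ := fun r r' h => hφinj (by rw [← (hσ r).2, ← (hσ r').2, h])
  have hg : Injective fun r => (σ r).toStrongDual := WeakDual.toStrongDual.injective.comp hσinj
  refine ⟨Set.range fun r => (σ r).toStrongDual, Set.infinite_range_of_injective hg, ?_,
    fun F hF => norm_sum_smul_eq_sum_norm_of_subset_range hε0
      (norm_le_one_of_forall_norm_sum_le fun m a => (hx m a).2) hψ hg
      (fun r => by simpa using (hσ r).1) (fun r n => congrFun (hσ r).2 n) hF, ?_⟩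
  · simpa using Cardinal.mk_range_eq_of_injective hg
  · simpa [← Set.range_comp, Function.comp_def] using hσperf

/-- If `X` contains asymptotically isometric copies of `ℓ₁`, then `X*` contains an
infinite set `Γ` of the cardinality of the continuum which is isometrically equivalent
to the usual basis of `ℓ₁(Γ)` and which is dense-in-itself (preperfect) in the
weak-star topology on `X*`. -/
theorem dual_contains_l1Gamma_set_of_ai (𝕜 : Type*) [RCLike 𝕜]
    (X : Type*) [NormedAddCommGroup X] [NormedSpace 𝕜 X] [CompleteSpace X]
    (h : ContainsAICopiesOfL1 𝕜 X) :
    ∃ Γ : Set (StrongDual 𝕜 X),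
      Γ.Infinite ∧
      Cardinal.mk Γ = Cardinal.continuum ∧
      (∀ F : Finset (StrongDual 𝕜 X), ↑F ⊆ Γ → ∀ a : StrongDual 𝕜 X → 𝕜,
        ‖∑ γ ∈ F, a γ • γ‖ = ∑ γ ∈ F, ‖a γ‖) ∧
      Preperfect ((fun f => StrongDual.toWeakDual f) '' Γ : Set (WeakDual 𝕜 X)) :=
  dual_contains_l1Gamma_set_of_ai_general 𝕜 X h
end

section
/- Let X be a real or complex Banach space and suppose X* contains an infinite subset Γ which is isometrically equivalent to the usual basis of ℓ₁(Γ) — i.e. ‖∑_{γ∈F} a_γ γ‖ = ∑_{γ∈F} |a_γ| for every finite subset F of Γ and scalars (a_γ)_{γ∈F} — and which is dense-in-itself in the weak-star topology on X*. Then X contains asymptotically isometric copies of ℓ₁. -/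
open Filter Finset

/-!
Fix finite nets `Ω k` of the unit sphere of `𝕜` with mesh `2⁻ᵏ⁻²`. By induction we build unit-ball
vectors `x₀, x₁, …` together with, at stage `n`, functionals `F t ∈ Γ` indexed by `t ∈ Ω₀ × ⋯ × Ωₙ₋₁` such that `re (t k * F t (x k)) ≥ 1 - 2⁻ᵏ⁻² + 2⁻ⁿ⁻²`.
To pass to stage `n + 1`, weak-star density-in-itself gives, for every `t` and `ω ∈ Ωₙ`, a new
point of `Γ` close to `F t` at `x₀, …, xₙ₋₁`, all of them distinct. Since `Γ` is an isometric
`ℓ₁`-basis, `∑ ω • g` has norm equal to the number `N` of terms, so some `xₙ` in the unit ball has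
`re (∑ ω • g)(xₙ) > N - δ`, forcing every term to exceed `1 - δ`. Finally, for scalars `aₖ` pick
`tₖ ∈ Ωₖ` close to the phase of `aₖ`; then `re (F t (∑ aₖ xₖ)) ≥ ∑ (1 - 2⁻ᵏ⁻¹) ‖aₖ‖`.
-/

theorem AccPt.inter_mem_nhds {α : Type*} [TopologicalSpace α] {x : α} {S U : Set α} (h : AccPt x (𝓟 S)) (hU : U ∈ nhds x) :
    AccPt x (𝓟 (S ∩ U)) :=
  accPt_iff_frequently.2 <| ((accPt_iff_frequently.1 h).and_eventually hU).mono
    fun _ ⟨⟨hne, hS⟩, hU⟩ => ⟨hne, hS, hU⟩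

theorem exists_injective_forall_mem_of_infinite {ι α : Type*} [Finite ι] {V : ι → Set α}
    (hV : ∀ i, (V i).Infinite) : ∃ f : ι → α, Function.Injective f ∧ ∀ i, f i ∈ V i := by
  classical
  cases nonempty_fintype ι
  choose t htV htcard using fun i => (hV i).exists_subset_card_eq (Fintype.card ι)
  -- Hall's condition holds because every `t i` alone already has `card ι` elements.
  obtain ⟨f, hf, hft⟩ := (all_card_le_biUnion_card_iff_exists_injective t).1 fun s => by
    rcases s.eq_empty_or_nonempty with rfl | ⟨i, hi⟩
    · simp
    · calc #s ≤ Fintype.card ι := card_le_univ s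
        _ = #(t i) := (htcard i).symm
        _ ≤ #(s.biUnion t) := card_le_card (subset_biUnion_of_mem t hi)
  exact ⟨f, hf, fun i => htV i (hft i)⟩

theorem exists_seq_of_forall_exists_snoc {α : Type*} {P : ∀ n, (Fin n → α) → Prop}
    (h0 : P 0 Fin.elim0) (hstep : ∀ n v, P n v → ∃ a, P (n + 1) (Fin.snoc v a)) :
    ∃ x : ℕ → α, ∀ n, P n fun k => x k := by
  choose next hnext using hstep
  let stage : ∀ n, {v : Fin n → α // P n v} := fun n =>
    Nat.rec ⟨Fin.elim0, h0⟩ (fun n s => ⟨Fin.snoc s.1 (next n s.1 s.2), hnext n s.1 s.2⟩) n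
  have hstage : ∀ n, (stage n).1 = fun k : Fin n => next k (stage k).1 (stage k).2 := by
    intro n
    induction n with
    | zero => funext k; exact k.elim0
    | succ n ih =>
      funext k
      refine Fin.lastCases ?_ (fun j => ?_) k
      · exact Fin.snoc_last (α := fun _ => α) _ _
      · exact (Fin.snoc_castSucc (α := fun _ => α) _ _ _).trans (congrFun ih j)
  exact ⟨fun n => next n (stage n).1 (stage n).2, fun n => hstage n ▸ (stage n).2⟩

namespace RCLike

variable {𝕜 : Type*} [RCLike 𝕜]

theorem exists_finset_approx_phase {η : ℝ} (hη : 0 < η) :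
    ∃ S : Finset 𝕜, (∀ ω ∈ S, ‖ω‖ = 1) ∧ ∀ a : 𝕜, ∃ ω ∈ S, ‖a - ‖a‖ • ω‖ ≤ η * ‖a‖ := by
  obtain ⟨s, hs, hsfin, hcov⟩ := (isCompact_sphere (0 : 𝕜) 1).finite_cover_balls hη
  refine ⟨hsfin.toFinset, fun ω hω => by simpa using hs (hsfin.mem_toFinset.1 hω), fun a => ?_⟩
  obtain ⟨θ, hθ, ha⟩ : ∃ θ : 𝕜, ‖θ‖ = 1 ∧ a = ‖a‖ • θ := by
    rcases eq_or_ne a 0 with rfl | ha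
    · exact ⟨1, norm_one, by simp⟩
    · refine ⟨a / ‖a‖, by simp [norm_div, ha], ?_⟩
      rw [real_smul_eq_coe_mul, mul_div_cancel₀ _ (by simpa using ha)]
  obtain ⟨ω, hωs, hθω⟩ := Set.mem_iUnion₂.1 (hcov (show θ ∈ Metric.sphere (0 : 𝕜) 1 by simpa))
  refine ⟨ω, hsfin.mem_toFinset.2 hωs, ?_⟩
  have hdiff : a - ‖a‖ • ω = ‖a‖ • (θ - ω) := by rw [smul_sub, ← ha]
  rw [hdiff, norm_smul, norm_norm, mul_comm]
  exact mul_le_mul_of_nonneg_right (le_of_lt (by simpa [dist_eq_norm] using hθω)) (norm_nonneg _)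

theorem re_mul_sub_norm_sub_le {ω : 𝕜} (hω : ‖ω‖ = 1) (z w : 𝕜) :
    re (ω * z) - ‖w - z‖ ≤ re (ω * w) := by
  have h : re (ω * w) = re (ω * z) + re (ω * (w - z)) := by rw [mul_sub, map_sub]; ring
  have := neg_abs_le (re (ω * (w - z)))
  have := (abs_re_le_norm (ω * (w - z))).trans_eq (by rw [norm_mul, hω, one_mul])
  linarith

theorem norm_mul_re_sub_le_re_mul {a ω z : 𝕜} {η : ℝ} (ha : ‖a - ‖a‖ • ω‖ ≤ η * ‖a‖)
    (hz : ‖z‖ ≤ 1) : ‖a‖ * (re (ω * z) - η) ≤ re (a * z) := by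
  have h : re (a * z) = ‖a‖ * re (ω * z) + re ((a - ‖a‖ • ω) * z) := by
    rw [sub_mul, map_sub, smul_mul_assoc, smul_re]
    ring
  have := neg_abs_le (re ((a - ‖a‖ • ω) * z))
  have : |re ((a - ‖a‖ • ω) * z)| ≤ η * ‖a‖ :=
    calc |re ((a - ‖a‖ • ω) * z)| ≤ ‖a - ‖a‖ • ω‖ * ‖z‖ := (abs_re_le_norm _).trans_eq (norm_mul _ _)
      _ ≤ η * ‖a‖ := (mul_le_of_le_one_right (norm_nonneg _) hz).trans ha
  linarith

end RCLike

def IsIsometricL1Basis (𝕜 : Type*) {E : Type*} [NormedField 𝕜] [SeminormedAddCommGroup E]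
    [Module 𝕜 E] (Γ : Set E) : Prop :=
  ∀ F : Finset E, ↑F ⊆ Γ → ∀ a : E → 𝕜, ‖∑ γ ∈ F, a γ • γ‖ = ∑ γ ∈ F, ‖a γ‖

namespace IsIsometricL1Basis

variable {𝕜 E : Type*} [NormedField 𝕜] [SeminormedAddCommGroup E] [Module 𝕜 E] {Γ : Set E}

theorem norm_eq_one (hΓ : IsIsometricL1Basis 𝕜 Γ) {γ : E} (hγ : γ ∈ Γ) : ‖γ‖ = 1 := by
  simpa using hΓ {γ} (by simpa using hγ) fun _ => 1

theorem norm_sum_smul (hΓ : IsIsometricL1Basis 𝕜 Γ) {ι : Type*} [Fintype ι] {g : ι → E}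
    (hg : Function.Injective g) (hgΓ : ∀ i, g i ∈ Γ) (a : ι → 𝕜) :
    ‖∑ i, a i • g i‖ = ∑ i, ‖a i‖ := by
  classical
  have := hΓ (univ.map ⟨g, hg⟩) (by simpa [Set.range_subset_iff] using hgΓ)
    (Function.extend g a 0)
  simpa [hg.extend_apply] using this

end IsIsometricL1Basis

section Dual

variable {𝕜 X : Type*} [RCLike 𝕜] [NormedAddCommGroup X] [NormedSpace 𝕜 X]

open RCLike

theorem StrongDual.exists_norm_le_one_lt_re_apply (f : StrongDual 𝕜 X) {r : ℝ} (hr : r < ‖f‖) :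
    ∃ x : X, ‖x‖ ≤ 1 ∧ r < re (f x) := by
  rcases lt_or_ge r 0 with hr0 | hr0
  · exact ⟨0, by simp, by simpa using hr0⟩
  obtain ⟨x, hx, hrx⟩ := f.exists_lt_apply_of_lt_opNorm hr
  have hfx : f x ≠ 0 := fun h => by simp [h] at hrx; linarith
  -- rotate `x` so that `f x` becomes the positive real `‖f x‖`
  refine ⟨((‖f x‖ : 𝕜) / f x) • x, ?_, ?_⟩
  · rw [norm_smul, norm_div, norm_ofReal, abs_norm, div_self (norm_ne_zero_iff.2 hfx), one_mul]
    exact hx.le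
  · rwa [map_smul, smul_eq_mul, div_mul_cancel₀ _ hfx, ofReal_re]

theorem StrongDual.exists_norm_le_one_forall_lt_re_apply {ι : Type*} [Fintype ι]
    (φ : ι → StrongDual 𝕜 X) (hφ : ∀ i, ‖φ i‖ ≤ 1) (hsum : ‖∑ i, φ i‖ = Fintype.card ι)
    {δ : ℝ} (hδ : 0 < δ) : ∃ x : X, ‖x‖ ≤ 1 ∧ ∀ i, 1 - δ < re (φ i x) := by
  classical
  obtain ⟨x, hx, hlt⟩ := (∑ i, φ i).exists_norm_le_one_lt_re_apply
    (show (Fintype.card ι : ℝ) - δ < ‖∑ i, φ i‖ by linarith)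
  have hle : ∀ i, re (φ i x) ≤ 1 := fun i =>
    (re_le_norm _).trans <| (φ i).le_of_opNorm_le (hφ i) x |>.trans (by simpa using hx)
  refine ⟨x, hx, fun i => ?_⟩
  have hrest : ∑ j ∈ univ.erase i, re (φ j x) ≤ Fintype.card ι - 1 := by
    calc ∑ j ∈ univ.erase i, re (φ j x) ≤ ∑ j ∈ univ.erase i, (1 : ℝ) := sum_le_sum fun j _ => hle j
      _ = Fintype.card ι - 1 := by
        rw [sum_const, card_erase_of_mem (mem_univ i), nsmul_one, card_univ,
          Nat.cast_pred (Fintype.card_pos_iff.2 ⟨i⟩)]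
  have hsplit := add_sum_erase univ (fun j => re (φ j x)) (mem_univ i)
  simp only [FunLike.coe_sum, Finset.sum_apply, map_sum] at hlt
  linarith

theorem Preperfect.infinite_setOf_norm_apply_sub_lt {Γ : Set (StrongDual 𝕜 X)}
    (hperf : Preperfect (StrongDual.toWeakDual '' Γ))
    {γ : StrongDual 𝕜 X} (hγ : γ ∈ Γ) {n : ℕ} (v : Fin n → X) {δ : ℝ} (hδ : 0 < δ) :
    {g | g ∈ Γ ∧ ∀ k, ‖g (v k) - γ (v k)‖ < δ}.Infinite := by
  let U : Set (WeakDual 𝕜 X) := {φ | ∀ k, ‖φ (v k) - γ (v k)‖ < δ}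
  have hU : U ∈ nhds (StrongDual.toWeakDual γ) := by
    refine IsOpen.mem_nhds ?_ fun k => by simpa using hδ
    simp only [U, Set.ofPred_forall]
    exact isOpen_iInter_of_finite fun k => isOpen_lt
      (continuous_norm.comp ((WeakDual.eval_continuous (v k)).sub continuous_const))
      continuous_const
  have hinf := Set.Infinite.of_accPt ((hperf _ ⟨γ, hγ, rfl⟩).inter_mem_nhds hU)
  rw [← Set.image_inter_preimage] at hinf
  exact hinf.of_image _

end Dual

section Construction

variable {𝕜 X : Type*} [RCLike 𝕜] [NormedAddCommGroup X] [NormedSpace 𝕜 X]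

open RCLike

/-- The surplus `2⁻ⁿ⁻²` is what the next stage spends on perturbing each `F t`. -/
def IsNormingStage (Γ : Set (StrongDual 𝕜 X)) (Ω : ℕ → Finset 𝕜) (n : ℕ) (v : Fin n → X) :
    Prop :=
  (∀ k, ‖v k‖ ≤ 1) ∧ ∃ F : ((k : Fin n) → Ω k) → StrongDual 𝕜 X, ∀ t, F t ∈ Γ ∧
    ∀ k, 1 - (1 / 2 : ℝ) ^ (k.val + 2) + (1 / 2 : ℝ) ^ (n + 2) ≤ re ((t k : 𝕜) * F t (v k))

variable {Γ : Set (StrongDual 𝕜 X)} {Ω : ℕ → Finset 𝕜}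

theorem isNormingStage_zero {γ : StrongDual 𝕜 X} (hγ : γ ∈ Γ) :
    IsNormingStage Γ Ω 0 Fin.elim0 :=
  ⟨fun k => k.elim0, fun _ => γ, fun _ => ⟨hγ, fun k => k.elim0⟩⟩

theorem IsNormingStage.exists_snoc (hΓ : IsIsometricL1Basis 𝕜 Γ)
    (hperf : Preperfect (StrongDual.toWeakDual '' Γ))
    (hΩ : ∀ k, ∀ ω ∈ Ω k, ‖ω‖ = 1) {n : ℕ} {v : Fin n → X} (h : IsNormingStage Γ Ω n v) :
    ∃ y, IsNormingStage Γ Ω (n + 1) (Fin.snoc v y) := by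
  obtain ⟨hv, F, hF⟩ := h
  set δ : ℝ := (1 / 2) ^ (n + 1 + 2) with hδ
  obtain ⟨g, hg, hgV⟩ := exists_injective_forall_mem_of_infinite fun s : (k : Fin (n + 1)) → Ω k =>
    hperf.infinite_setOf_norm_apply_sub_lt (hF (Fin.init s)).1 v (δ := δ) (by positivity)
  have hg1 : ∀ s, ‖g s‖ = 1 := fun s => hΓ.norm_eq_one (hgV s).1
  have hlast : ∀ s : (k : Fin (n + 1)) → Ω k, ‖(s (Fin.last n) : 𝕜)‖ = 1 :=
    fun s => hΩ _ _ (s (Fin.last n)).2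
  obtain ⟨y, hy, hgy⟩ := StrongDual.exists_norm_le_one_forall_lt_re_apply
    (fun s => (s (Fin.last n) : 𝕜) • g s) (fun s => by rw [norm_smul, hlast, hg1, one_mul])
    (by simp [hΓ.norm_sum_smul hg fun s => (hgV s).1, hlast]) (by positivity : 0 < δ)
  refine ⟨y, Fin.lastCases (by simpa using hy) (fun k => by simpa using hv k),
    g, fun s => ⟨(hgV s).1, fun k => ?_⟩⟩
  have hhalf : δ = (1 / 2) ^ (n + 2) / 2 := by rw [hδ]; ring
  induction k using Fin.lastCases with
  | last =>
    have hnew := hgy s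
    simp only [smul_eq_mul, FunLike.coe_smul, Pi.smul_apply] at hnew
    simp only [Fin.val_last, Fin.snoc_last]
    linarith
  | cast k =>
    have hold := (hF (Fin.init s)).2 k
    have hmove := re_mul_sub_norm_sub_le (hΩ _ _ (Fin.init s k).2)
      (F (Fin.init s) (v k)) (g s (v k))
    have hclose := (hgV s).2 k
    simp only [Fin.val_castSucc, Fin.snoc_castSucc]
    exact le_trans (by linarith) hmove

theorem IsNormingStage.sum_le_norm_sum (hΓ : IsIsometricL1Basis 𝕜 Γ)
    (hΩ : ∀ k (a : 𝕜), ∃ ω ∈ Ω k, ‖a - ‖a‖ • ω‖ ≤ (1 / 2) ^ (k + 2) * ‖a‖)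
    {m : ℕ} {v : Fin m → X} (h : IsNormingStage Γ Ω m v) (a : Fin m → 𝕜) :
    ∑ k, (1 - (1 / 2 : ℝ) ^ (k.val + 1)) * ‖a k‖ ≤ ‖∑ k, a k • v k‖ := by
  obtain ⟨hv, F, hF⟩ := h
  choose t ht using fun k : Fin m => hΩ k (a k)
  obtain ⟨hfΓ, hft⟩ := hF fun k => ⟨t k, (ht k).1⟩
  set f := F fun k => ⟨t k, (ht k).1⟩
  have hf : ‖f‖ = 1 := hΓ.norm_eq_one hfΓ
  have hterm : ∀ k, (1 - (1 / 2 : ℝ) ^ (k.val + 1)) * ‖a k‖ ≤ re (a k * f (v k)) := fun k => by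
    have hfv : ‖f (v k)‖ ≤ 1 := f.le_of_opNorm_le hf.le (v k) |>.trans (by simpa using hv k)
    have hstage := hft k
    have hsurplus : (0 : ℝ) ≤ (1 / 2) ^ (m + 2) := by positivity
    have hhalf : (1 / 2 : ℝ) ^ (k.val + 1) = 2 * (1 / 2) ^ (k.val + 2) := by ring
    calc (1 - (1 / 2 : ℝ) ^ (k.val + 1)) * ‖a k‖
        ≤ ‖a k‖ * (re (t k * f (v k)) - (1 / 2) ^ (k.val + 2)) := by
          rw [mul_comm]; exact mul_le_mul_of_nonneg_left (by linarith) (norm_nonneg _)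
      _ ≤ re (a k * f (v k)) := norm_mul_re_sub_le_re_mul (ht k).2 hfv
  calc ∑ k, (1 - (1 / 2 : ℝ) ^ (k.val + 1)) * ‖a k‖ ≤ ∑ k, re (a k * f (v k)) :=
        sum_le_sum fun k _ => hterm k
    _ = re (f (∑ k, a k • v k)) := by simp [map_sum]
    _ ≤ ‖f (∑ k, a k • v k)‖ := re_le_norm _
    _ ≤ ‖∑ k, a k • v k‖ := f.le_of_opNorm_le hf.le _ |>.trans_eq (one_mul _)

theorem containsAICopiesOfL1_of_forall_isNormingStage (hΓ : IsIsometricL1Basis 𝕜 Γ)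
    (hΩ : ∀ k (a : 𝕜), ∃ ω ∈ Ω k, ‖a - ‖a‖ • ω‖ ≤ (1 / 2) ^ (k + 2) * ‖a‖)
    {x : ℕ → X} (hx : ∀ n, IsNormingStage Γ Ω n fun k => x k) : ContainsAICopiesOfL1 𝕜 X := by
  have hx1 : ∀ k, ‖x k‖ ≤ 1 := fun k => (hx (k + 1)).1 (Fin.last k)
  refine ⟨fun k => (1 / 2) ^ (k + 1), x, fun k => ⟨by positivity, pow_lt_one₀ (by norm_num)
    (by norm_num) (by omega)⟩, ?_, fun m a => ⟨?_, ?_⟩⟩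
  · exact (tendsto_pow_atTop_nhds_zero_of_lt_one (by norm_num : (0 : ℝ) ≤ 1 / 2)
      (by norm_num)).comp (tendsto_add_atTop_nat 1)
  · simpa only [sum_range] using (hx m).sum_le_norm_sum hΓ hΩ fun k => a k
  · exact (norm_sum_le _ _).trans <| sum_le_sum fun k _ =>
      (norm_smul_le _ _).trans (mul_le_of_le_one_right (norm_nonneg _) (hx1 k))

end Construction

theorem ai_of_dual_contains_l1Gamma_set_general (𝕜 : Type*) [RCLike 𝕜]
    (X : Type*) [NormedAddCommGroup X] [NormedSpace 𝕜 X]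
    (Γ : Set (StrongDual 𝕜 X)) (hΓ : Γ.Infinite)
    (hiso : ∀ F : Finset (StrongDual 𝕜 X), ↑F ⊆ Γ → ∀ a : StrongDual 𝕜 X → 𝕜,
      ‖∑ γ ∈ F, a γ • γ‖ = ∑ γ ∈ F, ‖a γ‖)
    (hperf : Preperfect ((fun f => StrongDual.toWeakDual f) '' Γ : Set (WeakDual 𝕜 X))) :
    ContainsAICopiesOfL1 𝕜 X := by
  obtain ⟨γ, hγ⟩ := hΓ.nonempty
  choose Ω hΩ hΩapprox using fun k : ℕ =>
    RCLike.exists_finset_approx_phase (𝕜 := 𝕜) (η := (1 / 2) ^ (k + 2)) (by positivity)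
  obtain ⟨x, hx⟩ := exists_seq_of_forall_exists_snoc (isNormingStage_zero (Ω := Ω) hγ)
    fun _ _ h => h.exists_snoc hiso hperf hΩ
  exact containsAICopiesOfL1_of_forall_isNormingStage hiso hΩapprox hx

/-- If `X*` contains an infinite set `Γ` isometrically equivalent to the usual basis of
`ℓ₁(Γ)` which is dense-in-itself in the weak-star topology, then `X` contains
asymptotically isometric copies of `ℓ₁`. -/
theorem ai_of_dual_contains_l1Gamma_set (𝕜 : Type*) [RCLike 𝕜]
    (X : Type*) [NormedAddCommGroup X] [NormedSpace 𝕜 X] [CompleteSpace X]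
    (Γ : Set (StrongDual 𝕜 X)) (hΓ : Γ.Infinite)
    (hiso : ∀ F : Finset (StrongDual 𝕜 X), ↑F ⊆ Γ → ∀ a : StrongDual 𝕜 X → 𝕜,
      ‖∑ γ ∈ F, a γ • γ‖ = ∑ γ ∈ F, ‖a γ‖)
    (hperf : Preperfect ((fun f => StrongDual.toWeakDual f) '' Γ : Set (WeakDual 𝕜 X))) :
    ContainsAICopiesOfL1 𝕜 X :=
  ai_of_dual_contains_l1Gamma_set_general 𝕜 X Γ hΓ hiso hperf
end

section
/- Let N and M be compact Hausdorff topological spaces with M perfect (nonempty and without isolated points), and let φ : N → M be a continuous surjection. Then there exists a subset Q of N such that Q is dense-in-itself (has no isolated points in its relative topology) and the restriction of φ to Q is a bijection from Q onto M. -/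
/-!
By Zorn's lemma and compactness, some closed `K ⊆ N` is minimal among the closed sets that `φ`
maps onto `M`. Such a `K` has no isolated points: removing an isolated point `x` would leave a
closed set whose image misses only `φ x`, making `φ x` isolated in `M`. A set `Q ⊆ K` containing
exactly one point of each fibre still maps onto `M`, so by minimality it is dense in `K`, and a
dense subset of a perfect set is dense-in-itself.
-/

open Set Function Topology

section MinimalClosedOnto

variable {X Y : Type*} [TopologicalSpace X] {f : X → Y}

theorem closure_eq_of_minimal_isClosed_image_eq_univ {K Q : Set X}
    (hK : Minimal (fun K : Set X => IsClosed K ∧ f '' K = univ) K) (hQK : Q ⊆ K)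
    (hQ : f '' Q = univ) : closure Q = K :=
  hK.eq_of_subset ⟨isClosed_closure, univ_subset_iff.1 (hQ ▸ image_mono subset_closure)⟩
    (closure_minimal hQK hK.prop.1)

variable [TopologicalSpace Y]

theorem image_sInter_eq_univ_of_isChain [CompactSpace X] [T1Space Y] (hf : Continuous f)
    {C : Set (Set X)} (hC : ∀ K ∈ C, IsClosed K ∧ f '' K = univ) (hne : C.Nonempty)
    (hchain : IsChain (· ⊆ ·) C) : f '' ⋂₀ C = univ := by
  have : Nonempty C := hne.to_subtype
  refine eq_univ_of_forall fun y => ?_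
  have hfiber : IsClosed (f ⁻¹' {y}) := isClosed_singleton.preimage hf
  obtain ⟨x, hx⟩ := IsCompact.nonempty_iInter_of_directed_nonempty_isCompact_isClosed
    (fun K : C => (K : Set X) ∩ f ⁻¹' {y})
    (fun K L => (hchain.total K.2 L.2).elim
      (fun h => ⟨K, subset_rfl, inter_subset_inter_left _ h⟩)
      (fun h => ⟨L, inter_subset_inter_left _ h, subset_rfl⟩))
    (fun K => by
      obtain ⟨x, hxK, rfl⟩ := eq_univ_iff_forall.1 (hC K K.2).2 y
      exact ⟨x, hxK, rfl⟩)
    (fun K => ((hC K K.2).1.inter hfiber).isCompact)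
    (fun K => (hC K K.2).1.inter hfiber)
  simp only [mem_iInter, mem_inter_iff, mem_preimage, mem_singleton_iff] at hx
  exact ⟨x, mem_sInter.2 fun K hK => (hx ⟨K, hK⟩).1, (hx (Classical.arbitrary C)).2⟩

theorem exists_minimal_isClosed_image_eq_univ [CompactSpace X] [T1Space Y] (hf : Continuous f)
    (hsurj : Surjective f) : ∃ K, Minimal (fun K : Set X => IsClosed K ∧ f '' K = univ) K := by
  refine zorn_superset _ fun C hC hchain => ?_
  rcases C.eq_empty_or_nonempty with rfl | hne
  · exact ⟨univ, ⟨isClosed_univ, image_univ_of_surjective hsurj⟩, by simp⟩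
  exact ⟨⋂₀ C, ⟨isClosed_sInter fun K hK => (hC hK).1,
    image_sInter_eq_univ_of_isChain hf (fun K hK => hC hK) hne hchain⟩,
    fun K hK => sInter_subset_of_mem hK⟩

theorem preperfect_of_minimal_isClosed_image_eq_univ [CompactSpace X] [T2Space Y] [PerfectSpace Y]
    (hf : Continuous f) {K : Set X}
    (hK : Minimal (fun K : Set X => IsClosed K ∧ f '' K = univ) K) : Preperfect K := by
  obtain ⟨hKc, hKf⟩ := hK.prop
  intro x hxK
  by_contra hx
  obtain ⟨U, hU, hUK⟩ : ∃ U ∈ 𝓝 x, ∀ y ∈ U ∩ K, y = x := by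
    simpa [accPt_iff_nhds] using hx
  obtain ⟨V, hVU, hVo, hxV⟩ := mem_nhds_iff.mp hU
  have hKV : IsClosed (K \ V) := hKc.sdiff hVo
  have hmiss : (f '' (K \ V))ᶜ.Nonempty := by
    refine nonempty_compl.2 fun h => ?_
    have := hK.eq_of_subset ⟨hKV, h⟩ sdiff_subset
    exact (this ▸ hxK).2 hxV
  have hsub : (f '' (K \ V))ᶜ ⊆ {f x} := by
    intro y hy
    obtain ⟨z, hzK, rfl⟩ := eq_univ_iff_forall.1 hKf y
    have hzV : z ∈ V := by_contra fun hzV => hy ⟨z, ⟨hzK, hzV⟩, rfl⟩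
    rw [hUK z ⟨hVU hzV, hzK⟩]
    rfl
  have hopen : IsOpen (f '' (K \ V))ᶜ := (hKV.isCompact.image hf).isClosed.isOpen_compl
  exact not_isOpen_singleton (f x) ((hmiss.subset_singleton_iff.1 hsub) ▸ hopen)

end MinimalClosedOnto

theorem exists_dense_in_itself_selection_general
    (N : Type*) [TopologicalSpace N] [CompactSpace N] [T2Space N]
    (M : Type*) [TopologicalSpace M] [T2Space M]
    (hM : Preperfect (Set.univ : Set M))
    (φ : N → M) (hφc : Continuous φ) (hφs : Function.Surjective φ) :
    ∃ Q : Set N, Preperfect Q ∧ Set.BijOn φ Q Set.univ := by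
  have : PerfectSpace M := ⟨hM⟩
  obtain ⟨K, hK⟩ := exists_minimal_isClosed_image_eq_univ hφc hφs
  choose q hqK hqφ using eq_univ_iff_forall.1 hK.prop.2
  have hbij : BijOn φ (range q) univ :=
    InvOn.bijOn ⟨LeftInverse.rightInvOn_range hqφ, LeftInverse.leftInvOn hqφ univ⟩
      (mapsTo_univ _ _) (mapsTo_range _ _)
  have hclosure : closure (range q) = K :=
    closure_eq_of_minimal_isClosed_image_eq_univ hK (range_subset_iff.2 hqK) hbij.image_eq
  refine ⟨range q, preperfect_iff_perfect_closure.2 ?_, hbij⟩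
  rw [hclosure]
  exact ⟨hK.prop.1, preperfect_of_minimal_isClosed_image_eq_univ hφc hK⟩

/-- If `N` and `M` are compact Hausdorff spaces with `M` perfect (nonempty with no
isolated points) and `φ : N → M` is a continuous surjection, then there is a
dense-in-itself subset `Q` of `N` such that `φ` restricted to `Q` is a bijection
onto `M`. -/
theorem exists_dense_in_itself_selection
    (N : Type*) [TopologicalSpace N] [CompactSpace N] [T2Space N]
    (M : Type*) [TopologicalSpace M] [CompactSpace M] [T2Space M]
    [Nonempty M] (hM : Preperfect (Set.univ : Set M))
    (φ : N → M) (hφc : Continuous φ) (hφs : Function.Surjective φ) :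
    ∃ Q : Set N, Preperfect Q ∧ Set.BijOn φ Q Set.univ :=
  exists_dense_in_itself_selection_general N M hM φ hφc hφs
end

section
/- Let X be a real or complex Banach space and suppose that ℓ∞, the Banach space of bounded scalar sequences with the supremum norm, is linearly isometric to a subspace of X*. Then X contains asymptotically isometric copies of ℓ₁. -/
/-!
Let `eₙ` be the unit vectors of `ℓ∞`; the functionals `T eₙ` have norm one, so there are unit
vectors `xₙ` with `re (T eₙ) xₙ > 1 - εₙ / 2`. As the norm of `ℓ∞` is a supremum,
`‖eₙ + c • b‖ ≤ 1` whenever `b` vanishes at `n`, `‖b‖ ≤ 1` and `‖c‖ = 1`; applied to a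
unimodular `c` rotating `(T b) xₙ` onto the positive reals this gives
`‖(T b) xₙ‖ ≤ 1 - re (T eₙ) xₙ < εₙ / 2`. Given scalars `aₙ`, split their sign vector
`s ∈ ℓ∞` (`aₙ sₙ = ‖aₙ‖`) as `sₙ eₙ + b`: then `re (aₙ (T s) xₙ) ≥ (1 - εₙ) ‖aₙ‖`, and the
functional `T s` of norm at most one yields the lower `ℓ₁` estimate for `∑ aₙ xₙ`.
-/

open Filter Finset

open RCLike

namespace lp

variable {𝕜 : Type*} [RCLike 𝕜]

theorem norm_single_add_le_of_apply_eq_zero (k : ℕ) (a : 𝕜) {b : lp (fun _ : ℕ => 𝕜) ⊤}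
    (hb : b k = 0) : ‖lp.single ⊤ k a + b‖ ≤ max ‖a‖ ‖b‖ := by
  refine lp.norm_le_of_forall_le (le_max_of_le_left (norm_nonneg a)) fun j => ?_
  rcases eq_or_ne j k with rfl | hj
  · simp [hb]
  · rw [lp.coeFn_add, Pi.add_apply, lp.single_apply_ne _ _ _ hj, zero_add]
    exact le_max_of_le_right (lp.norm_apply_le_norm ENNReal.top_ne_zero b j)

theorem exists_norm_le_one_mul_apply_eq_norm (a : ℕ → 𝕜) :
    ∃ s : lp (fun _ : ℕ => 𝕜) ⊤, ‖s‖ ≤ 1 ∧ ∀ k, a k * s k = ‖a k‖ := by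
  choose c hc_norm hc using fun k => exists_norm_eq_mul_self (a k)
  have hc_mem : Memℓp c ⊤ := memℓp_infty ⟨1, by rintro _ ⟨k, rfl⟩; exact (hc_norm k).le⟩
  exact ⟨⟨c, hc_mem⟩, lp.norm_le_of_forall_le zero_le_one fun k => (hc_norm k).le,
    fun k => by rw [hc, mul_comm]⟩

variable {φ : StrongDual 𝕜 (lp (fun _ : ℕ => 𝕜) ⊤)}

theorem re_apply_single_add_norm_apply_le (hφ : ‖φ‖ ≤ 1) (k : ℕ)
    {b : lp (fun _ : ℕ => 𝕜) ⊤} (hbk : b k = 0) (hb : ‖b‖ ≤ 1) :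
    re (φ (lp.single ⊤ k 1)) + ‖φ b‖ ≤ 1 := by
  obtain ⟨c, hc_norm, hc⟩ := exists_norm_eq_mul_self (φ b)
  have hv : ‖lp.single ⊤ k (1 : 𝕜) + c • b‖ ≤ 1 := by
    refine (norm_single_add_le_of_apply_eq_zero k 1 (by simp [hbk])).trans ?_
    simpa [norm_smul, hc_norm] using hb
  calc re (φ (lp.single ⊤ k 1)) + ‖φ b‖ = re (φ (lp.single ⊤ k 1 + c • b)) := by
        rw [map_add, map_smul, smul_eq_mul, ← hc, map_add, ofReal_re]
    _ ≤ ‖φ (lp.single ⊤ k 1 + c • b)‖ := re_le_norm _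
    _ ≤ 1 * ‖lp.single ⊤ k (1 : 𝕜) + c • b‖ := φ.le_of_opNorm_le hφ _
    _ ≤ 1 := by rwa [one_mul]

theorem norm_mul_two_mul_re_apply_single_sub_one_le (hφ : ‖φ‖ ≤ 1)
    {s : lp (fun _ : ℕ => 𝕜) ⊤} (hs : ‖s‖ ≤ 1) {a : 𝕜} {k : ℕ} (has : a * s k = ‖a‖) :
    ‖a‖ * (2 * re (φ (lp.single ⊤ k 1)) - 1) ≤ re (a * φ s) := by
  set b := s - lp.single ⊤ k (s k)
  have hbk : b k = 0 := by simp [b]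
  have hb : ‖b‖ ≤ 1 := by
    refine lp.norm_le_of_forall_le zero_le_one fun j => ?_
    rcases eq_or_ne j k with rfl | hj
    · simp [hbk]
    · rw [lp.coeFn_sub, Pi.sub_apply, lp.single_apply_ne _ _ _ hj, sub_zero]
      exact (lp.norm_apply_le_norm ENNReal.top_ne_zero s j).trans hs
  have hkey := re_apply_single_add_norm_apply_le hφ k hbk hb
  have hsplit : re (a * φ s) = ‖a‖ * re (φ (lp.single ⊤ k 1)) + re (a * φ b) := by
    rw [show s = s k • lp.single ⊤ k 1 + b by
      rw [← lp.single_smul, smul_eq_mul, mul_one, add_sub_cancel], map_add, map_smul, smul_eq_mul,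
      mul_add, ← mul_assoc, has, map_add, re_ofReal_mul]
  have herr : -(‖a‖ * ‖φ b‖) ≤ re (a * φ b) := by
    simpa [norm_mul] using neg_le_neg (re_le_norm (-(a * φ b)))
  nlinarith [norm_nonneg a]

end lp

section

variable {𝕜 X : Type*} [RCLike 𝕜] [NormedAddCommGroup X] [NormedSpace 𝕜 X]

theorem ContinuousLinearMap.exists_norm_lt_one_lt_re_apply (f : StrongDual 𝕜 X) {r : ℝ}
    (hr : r < ‖f‖) : ∃ x : X, ‖x‖ < 1 ∧ r < re (f x) := by
  obtain ⟨y, hy, hry⟩ := f.exists_lt_apply_of_lt_opNorm hr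
  obtain ⟨c, hc_norm, hc⟩ := exists_norm_eq_mul_self (f y)
  refine ⟨c • y, by rwa [norm_smul, hc_norm, one_mul], ?_⟩
  rwa [map_smul, smul_eq_mul, ← hc, ofReal_re]

theorem LinearIsometry.norm_apply_comp_toContinuousLinearMap_le {E : Type*}
    [NormedAddCommGroup E] [NormedSpace 𝕜 E] (T : E →ₗᵢ[𝕜] StrongDual 𝕜 X) (x : X) :
    ‖(ContinuousLinearMap.apply 𝕜 𝕜 x).comp T.toContinuousLinearMap‖ ≤ ‖x‖ :=
  ContinuousLinearMap.opNorm_le_bound _ (norm_nonneg x) fun v =>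
    ((T v).le_opNorm x).trans_eq (by rw [T.norm_map, mul_comm])

theorem containsAICopiesOfL1_of_forall_exists_functional {ε : ℕ → ℝ}
    (hε : ∀ n, 0 < ε n ∧ ε n < 1) (hε_lim : Tendsto ε atTop (nhds 0)) {x : ℕ → X}
    (hx : ∀ n, ‖x n‖ ≤ 1)
    (h : ∀ a : ℕ → 𝕜, ∃ g : StrongDual 𝕜 X, ‖g‖ ≤ 1 ∧
      ∀ n, (1 - ε n) * ‖a n‖ ≤ re (a n * g (x n))) :
    ContainsAICopiesOfL1 𝕜 X := by
  refine ⟨ε, x, hε, hε_lim, fun m a => ⟨?_, ?_⟩⟩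
  · obtain ⟨g, hg, hga⟩ := h a
    calc ∑ n ∈ range m, (1 - ε n) * ‖a n‖ ≤ ∑ n ∈ range m, re (a n * g (x n)) :=
          sum_le_sum fun n _ => hga n
      _ = re (g (∑ n ∈ range m, a n • x n)) := by simp [map_sum]
      _ ≤ ‖g (∑ n ∈ range m, a n • x n)‖ := re_le_norm _
      _ ≤ 1 * ‖∑ n ∈ range m, a n • x n‖ := g.le_of_opNorm_le hg _
      _ = ‖∑ n ∈ range m, a n • x n‖ := one_mul _
  · refine (norm_sum_le _ _).trans (sum_le_sum fun n _ => ?_)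
    rw [norm_smul]
    exact mul_le_of_le_one_right (norm_nonneg _) (hx n)

end

theorem ai_of_linfty_embeds_in_dual_general (𝕜 : Type*) [RCLike 𝕜]
    (X : Type*) [NormedAddCommGroup X] [NormedSpace 𝕜 X]
    (T : lp (fun _ : ℕ => 𝕜) ⊤ →ₗᵢ[𝕜] StrongDual 𝕜 X) :
    ContainsAICopiesOfL1 𝕜 X := by
  set ε : ℕ → ℝ := fun n => ((n : ℝ) + 2)⁻¹
  have hε : ∀ n, 0 < ε n ∧ ε n < 1 := fun n =>
    ⟨by positivity, inv_lt_one_of_one_lt₀ (by linarith [n.cast_nonneg (α := ℝ)])⟩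
  have hε_lim : Tendsto ε atTop (nhds 0) :=
    tendsto_inv_atTop_zero.comp (tendsto_atTop_add_const_right _ 2 tendsto_natCast_atTop_atTop)
  have hnorming : ∀ n, ∃ x : X, ‖x‖ < 1 ∧ 1 - ε n / 2 < re (T (lp.single ⊤ n 1) x) := fun n =>
    (T (lp.single ⊤ n 1)).exists_norm_lt_one_lt_re_apply (by simp [(hε n).1])
  choose x hx_norm hx using hnorming
  refine containsAICopiesOfL1_of_forall_exists_functional hε hε_lim (fun n => (hx_norm n).le)
    fun a => ?_
  obtain ⟨s, hs, has⟩ := lp.exists_norm_le_one_mul_apply_eq_norm a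
  refine ⟨T s, by rwa [T.norm_map], fun n => ?_⟩
  have hφ := (T.norm_apply_comp_toContinuousLinearMap_le (x n)).trans (hx_norm n).le
  refine le_trans ?_ (lp.norm_mul_two_mul_re_apply_single_sub_one_le hφ hs (has n))
  rw [mul_comm]
  refine mul_le_mul_of_nonneg_left ?_ (norm_nonneg _)
  simp only [ContinuousLinearMap.comp_apply, ContinuousLinearMap.apply_apply,
    LinearIsometry.coe_toContinuousLinearMap]
  linarith [hx n]

/-- (Chen–Lin, strengthened) If `ℓ∞` embeds linearly isometrically into `X*`, then `X`
contains asymptotically isometric copies of `ℓ₁`. -/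
theorem ai_of_linfty_embeds_in_dual (𝕜 : Type*) [RCLike 𝕜]
    (X : Type*) [NormedAddCommGroup X] [NormedSpace 𝕜 X] [CompleteSpace X]
    (T : lp (fun _ : ℕ => 𝕜) ⊤ →ₗᵢ[𝕜] StrongDual 𝕜 X) :
    ContainsAICopiesOfL1 𝕜 X :=
  ai_of_linfty_embeds_in_dual_general 𝕜 X T
end
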